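/- arXiv:1309.4567 — 8 statements merged into one kernel-verified Lean document; each statement's English description precedes it below -/
import Mathlib

section
/- Let X be a Banach space. Suppose that for every ε > 0 there exists a Banach space Y with the Daugavet property and a surjective linear operator T : X → Y such that (1 - ε)‖x‖ ≤ ‖T(x)‖ ≤ (1 + ε)‖x‖ for all x ∈ X. Then X has the Daugavet property. -/
/-- A (semi)normed space has the *Daugavet property* if every nonzero rank-one operator `S`
satisfies `‖Id + S‖ = 1 + ‖S‖`. -/
def DaugavetProperty (X : Type*) [SeminormedAddCommGroup X] [NormedSpace ℂ X] : Prop :=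
  ∀ (φ : X →L[ℂ] ℂ) (v : X), φ.smulRight v ≠ 0 →
    ‖ContinuousLinearMap.id ℂ X + φ.smulRight v‖ = 1 + ‖φ.smulRight v‖

/-- A witness for `ε`: a Banach space `Y` with the Daugavet property together with a surjective
operator `T : X → Y` satisfying `(1-ε)‖x‖ ≤ ‖T x‖ ≤ (1+ε)‖x‖`. -/
structure DaugavetApprox (X : Type*) [SeminormedAddCommGroup X] [NormedSpace ℂ X]
    (ε : ℝ) where
  Y : Type
  [instNorm : NormedAddCommGroup Y]
  [instSpace : NormedSpace ℂ Y]
  [instComplete : CompleteSpace Y]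
  daugavet : DaugavetProperty Y
  T : X →L[ℂ] Y
  surj : Function.Surjective T
  lower : ∀ x : X, (1 - ε) * ‖x‖ ≤ ‖T x‖
  upper : ∀ x : X, ‖T x‖ ≤ (1 + ε) * ‖x‖

/-- If a Banach space `X` is approximable, for every `ε > 0`, by Banach spaces
with the Daugavet property via surjective `(1±ε)`-isomorphisms, then `X` itself has the
Daugavet property. -/
theorem daugavetProperty_of_approx
    (X : Type*) [NormedAddCommGroup X] [NormedSpace ℂ X] [CompleteSpace X]
    (h : ∀ ε : ℝ, 0 < ε → Nonempty (DaugavetApprox X ε)) :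
    DaugavetProperty X := by
  intro φ v hS
  set S : X →L[ℂ] X := φ.smulRight v with hSdef
  have hub : ‖ContinuousLinearMap.id ℂ X + S‖ ≤ 1 + ‖S‖ :=
    (norm_add_le _ _).trans (by gcongr; exact ContinuousLinearMap.norm_id_le)
  refine le_antisymm hub ?_
  have key : ∀ ε ∈ Set.Ioo (0:ℝ) 1,
      ((1-ε)/(1+ε)) * (1 + ((1-ε)/(1+ε)) * ‖S‖) ≤ ‖ContinuousLinearMap.id ℂ X + S‖ := by
    rintro ε ⟨hε0, hε1⟩
    obtain ⟨A⟩ := h ε hε0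
    letI := A.instNorm
    letI := A.instSpace
    letI := A.instComplete
    have ha : (0:ℝ) < 1 - ε := by linarith
    have hb : (0:ℝ) < 1 + ε := by linarith
    have hTzero : ∀ x : X, A.T x = 0 → x = 0 := by
      intro x hx
      have h1 := A.lower x
      rw [hx, norm_zero] at h1
      have h2 : ‖x‖ ≤ 0 := by nlinarith [norm_nonneg x]
      exact norm_le_zero_iff.mp h2
    have hker : LinearMap.ker (A.T : X →ₗ[ℂ] A.Y) = ⊥ := LinearMap.ker_eq_bot'.mpr hTzero
    have hrange : LinearMap.range (A.T : X →ₗ[ℂ] A.Y) = ⊤ := LinearMap.range_eq_top.mpr A.surj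
    set e := ContinuousLinearEquiv.ofBijective A.T hker hrange with he_def
    have he : ∀ x : X, e x = A.T x :=
      fun x => congrFun (ContinuousLinearEquiv.coeFn_ofBijective A.T hker hrange) x
    have hsymm_apply : ∀ x : X, e.symm (A.T x) = x :=
      ContinuousLinearEquiv.ofBijective_symm_apply_apply A.T hker hrange
    have hsymmT : ∀ y : A.Y, A.T (e.symm y) = y := by
      intro y; rw [← he]; exact e.apply_symm_apply y
    set ψ : A.Y →L[ℂ] ℂ := φ.comp (e.symm : A.Y →L[ℂ] X) with hψdef
    set S' : A.Y →L[ℂ] A.Y := ψ.smulRight (A.T v) with hS'def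
    have hS'app : ∀ y : A.Y, S' y = A.T (S (e.symm y)) := by
      intro y
      show ψ y • A.T v = A.T (φ (e.symm y) • v)
      rw [map_smul]
      rfl
    have hS'ne : S' ≠ 0 := by
      obtain ⟨x, hx⟩ := DFunLike.ne_iff.mp hS
      simp only [ContinuousLinearMap.zero_apply] at hx
      intro h0
      apply hx
      have h1 : S' (A.T x) = 0 := by rw [h0]; rfl
      rw [hS'app, hsymm_apply] at h1
      exact hTzero _ h1
    have hd : ‖ContinuousLinearMap.id ℂ A.Y + S'‖ = 1 + ‖S'‖ := A.daugavet ψ (A.T v) hS'ne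
    -- bound 1 : ‖S‖ ≤ (1+ε)/(1-ε) * ‖S'‖
    have bound1 : ‖S‖ ≤ (1+ε)/(1-ε) * ‖S'‖ := by
      refine ContinuousLinearMap.opNorm_le_bound _ (by positivity) fun x => ?_
      have h1 : (1-ε) * ‖S x‖ ≤ ‖A.T (S x)‖ := A.lower _
      have h4 : A.T (S x) = S' (A.T x) := by rw [hS'app, hsymm_apply]
      rw [h4] at h1
      have h2 : ‖S' (A.T x)‖ ≤ ‖S'‖ * ‖A.T x‖ := ContinuousLinearMap.le_opNorm _ _
      have h3 : ‖A.T x‖ ≤ (1+ε) * ‖x‖ := A.upper x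
      rw [div_mul_eq_mul_div, div_mul_eq_mul_div, le_div_iff₀ ha]
      nlinarith [ContinuousLinearMap.opNorm_nonneg S', norm_nonneg x,
        mul_le_mul_of_nonneg_left h3 (ContinuousLinearMap.opNorm_nonneg S')]
    -- bound 2 : ‖Id + S'‖ ≤ (1+ε)/(1-ε) * ‖Id + S‖
    have bound2 : ‖ContinuousLinearMap.id ℂ A.Y + S'‖ ≤
        (1+ε)/(1-ε) * ‖ContinuousLinearMap.id ℂ X + S‖ := by
      refine ContinuousLinearMap.opNorm_le_bound _ (by positivity) fun y => ?_
      obtain ⟨x, rfl⟩ := A.surj y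
      have h5 : (ContinuousLinearMap.id ℂ A.Y + S') (A.T x) =
          A.T ((ContinuousLinearMap.id ℂ X + S) x) := by
        simp only [ContinuousLinearMap.add_apply, ContinuousLinearMap.id_apply, map_add]
        rw [hS'app, hsymm_apply]
      rw [h5]
      have h6 : ‖A.T ((ContinuousLinearMap.id ℂ X + S) x)‖ ≤
          (1+ε) * ‖(ContinuousLinearMap.id ℂ X + S) x‖ := A.upper _
      have h7 : ‖(ContinuousLinearMap.id ℂ X + S) x‖ ≤
          ‖ContinuousLinearMap.id ℂ X + S‖ * ‖x‖ := ContinuousLinearMap.le_opNorm _ _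
      have h8 : (1-ε) * ‖x‖ ≤ ‖A.T x‖ := A.lower x
      rw [div_mul_eq_mul_div, div_mul_eq_mul_div, le_div_iff₀ ha]
      nlinarith [norm_nonneg x, ContinuousLinearMap.opNorm_nonneg
          (ContinuousLinearMap.id ℂ X + S),
        mul_le_mul_of_nonneg_left h7 hb.le,
        mul_le_mul_of_nonneg_left h8
          (mul_nonneg hb.le (ContinuousLinearMap.opNorm_nonneg
            (ContinuousLinearMap.id ℂ X + S))),
        mul_le_mul_of_nonneg_right h6 ha.le]
    have e1 : (1-ε)/(1+ε) * ‖S‖ ≤ ‖S'‖ := by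
      rw [div_mul_eq_mul_div, le_div_iff₀ ha] at bound1
      rw [div_mul_eq_mul_div, div_le_iff₀ hb]
      linarith [bound1]
    have e2 : 1 + ‖S'‖ ≤ (1+ε)/(1-ε) * ‖ContinuousLinearMap.id ℂ X + S‖ := hd ▸ bound2
    have e3 : (1-ε)/(1+ε) * (1 + ‖S'‖) ≤ ‖ContinuousLinearMap.id ℂ X + S‖ := by
      rw [div_mul_eq_mul_div, le_div_iff₀ ha] at e2
      rw [div_mul_eq_mul_div, div_le_iff₀ hb]
      linarith [e2]
    refine le_trans ?_ e3
    gcongr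
  have hcont : ContinuousAt (fun t : ℝ => ((1-t)/(1+t)) * (1 + ((1-t)/(1+t)) * ‖S‖)) 0 := by
    have h1 : ContinuousAt (fun t : ℝ => (1-t)/(1+t)) 0 :=
      ContinuousAt.div (by fun_prop) (by fun_prop) (by norm_num)
    exact h1.mul (continuousAt_const.add (h1.mul continuousAt_const))
  have hval : ((1-(0:ℝ))/(1+(0:ℝ))) * (1 + ((1-(0:ℝ))/(1+(0:ℝ))) * ‖S‖) = 1 + ‖S‖ := by
    norm_num
  have hlim : Filter.Tendsto (fun t : ℝ => ((1-t)/(1+t)) * (1 + ((1-t)/(1+t)) * ‖S‖))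
      (nhdsWithin 0 (Set.Ioi 0)) (nhds (1 + ‖S‖)) := by
    have h2 : Filter.Tendsto (fun t : ℝ => ((1-t)/(1+t)) * (1 + ((1-t)/(1+t)) * ‖S‖))
        (nhdsWithin 0 (Set.Ioi 0)) (nhds (((1-(0:ℝ))/(1+(0:ℝ))) * (1 + ((1-(0:ℝ))/(1+(0:ℝ))) * ‖S‖))) :=
      hcont.tendsto.mono_left nhdsWithin_le_nhds
    rwa [hval] at h2
  exact le_of_tendsto hlim (Filter.eventually_of_mem
    (Ioo_mem_nhdsGT_of_mem (by norm_num : (0:ℝ) ∈ Set.Ico (0:ℝ) 1)) key)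
end

section
/- Let X be a Banach space with the Daugavet property and Y a rich subspace of X. Then for every x in the unit sphere of X, every y* in the unit sphere of Y*, and every ε > 0, there exists y in the unit sphere of Y with Re y*(y) ≥ 1 - ε and ‖x + y‖ ≥ 2 - ε. -/
/-- An operator (here: any map into a seminormed space) `T : X → E` is *narrow* if for all
`x, y` in the unit sphere of `X`, every functional `φ ∈ X*` and every `ε > 0` there is `z` in
the unit sphere with `‖T (y - z)‖ + |φ (y - z)| ≤ ε` and `‖x + z‖ ≥ 2 - ε`. -/
def IsNarrow {X E : Type*} [NormedAddCommGroup X] [NormedSpace ℂ X]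
    [SeminormedAddCommGroup E] (T : X → E) : Prop :=
  ∀ x y : X, ‖x‖ = 1 → ‖y‖ = 1 → ∀ φ : X →L[ℂ] ℂ, ∀ ε : ℝ, 0 < ε →
    ∃ z : X, ‖z‖ = 1 ∧ ‖T (y - z)‖ + ‖φ (y - z)‖ ≤ ε ∧ 2 - ε ≤ ‖x + z‖

/-- A closed subspace `Y ⊆ X` is *rich* if the quotient map `X → X/Y` is narrow. -/
def IsRichSubspace {X : Type*} [NormedAddCommGroup X] [NormedSpace ℂ X]
    (Y : Submodule ℂ X) : Prop :=
  IsNarrow (fun x : X => (Submodule.Quotient.mk x : X ⧸ Y))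

/-- If `X` has the Daugavet property and `Y` is a rich closed subspace, then
for every `x ∈ S_X`, `y* ∈ S_{Y*}` and `ε > 0` there exists `y ∈ S_Y` with
`Re y*(y) ≥ 1 - ε` and `‖x + y‖ ≥ 2 - ε`. -/
theorem rich_subspace_slices
    {X : Type*} [NormedAddCommGroup X] [NormedSpace ℂ X] [CompleteSpace X]
    (hX : DaugavetProperty X)
    (Y : Submodule ℂ X) (hYclosed : IsClosed (Y : Set X))
    (hYrich : IsRichSubspace Y) :
    ∀ x : X, ‖x‖ = 1 → ∀ ψ : Y →L[ℂ] ℂ, ‖ψ‖ = 1 → ∀ ε : ℝ, 0 < ε →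
      ∃ y : Y, ‖(y : X)‖ = 1 ∧ 1 - ε ≤ (ψ y).re ∧ 2 - ε ≤ ‖x + (y : X)‖ := by
  intro x hx ψ hψ ε hε
  set δ : ℝ := min ε 1 / 8 with hδdef
  have hδpos : 0 < δ := by
    have : (0:ℝ) < min ε 1 := lt_min hε one_pos
    positivity
  have hδε : 8 * δ ≤ ε := by
    have : min ε 1 ≤ ε := min_le_left _ _
    simp only [hδdef]; linarith
  have hδ1 : 8 * δ ≤ 1 := by
    have : min ε 1 ≤ 1 := min_le_right _ _
    simp only [hδdef]; linarith
  -- Step 1: find y₁ ∈ S_Y with Re ψ y₁ ≥ 1 - δ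
  obtain ⟨u, hu1, hu2⟩ := ψ.exists_lt_apply_of_lt_opNorm (r := 1 - δ) (by rw [hψ]; linarith)
  have hau : ‖ψ u‖ ≤ ‖u‖ := by
    calc ‖ψ u‖ ≤ ‖ψ‖ * ‖u‖ := ψ.le_opNorm u
    _ = ‖u‖ := by rw [hψ, one_mul]
  have hψu_pos : 0 < ‖ψ u‖ := by linarith
  have hupos : 0 < ‖u‖ := lt_of_lt_of_le hψu_pos hau
  set a : ℂ := ψ u with ha
  set s : ℂ := starRingEnd ℂ a / ((‖a‖ * ‖u‖ : ℝ) : ℂ) with hs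
  set y₁ : Y := s • u with hy₁
  have hsnorm : ‖s‖ = ‖u‖⁻¹ := by
    rw [hs, norm_div, RCLike.norm_conj, Complex.norm_real, Real.norm_eq_abs,
      abs_of_pos (by positivity)]
    rw [div_mul_eq_div_div, div_self (ne_of_gt hψu_pos), one_div]
  have hy₁norm : ‖y₁‖ = 1 := by
    rw [hy₁, norm_smul, hsnorm]
    exact inv_mul_cancel₀ (ne_of_gt hupos)
  have hψy₁ : ψ y₁ = ((‖a‖ / ‖u‖ : ℝ) : ℂ) := by
    have h1 : ((‖a‖ : ℝ) : ℂ) ≠ 0 := by exact_mod_cast ne_of_gt hψu_pos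
    have h2 : ((‖u‖ : ℝ) : ℂ) ≠ 0 := by exact_mod_cast ne_of_gt hupos
    rw [hy₁, map_smul, smul_eq_mul, hs, div_mul_eq_mul_div, Complex.conj_mul']
    push_cast
    rw [sq, mul_div_mul_left _ _ h1]
  have hre_y₁ : 1 - δ ≤ (ψ y₁).re := by
    rw [hψy₁, Complex.ofReal_re]
    have h1 : ‖a‖ ≤ ‖a‖ / ‖u‖ := by
      rw [le_div_iff₀ hupos]
      nlinarith
    linarith
  -- Step 2: Hahn-Banach extension
  obtain ⟨φ, hφext, hφnorm⟩ := exists_extension_norm_eq Y ψ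
  rw [hψ] at hφnorm
  -- Step 3: narrowness
  obtain ⟨z, hz1, hz2, hz3⟩ := hYrich x (y₁ : X) hx hy₁norm φ δ hδpos
  have hz2' : ‖(Submodule.Quotient.mk ((y₁ : X) - z) : X ⧸ Y)‖ + ‖φ ((y₁ : X) - z)‖ ≤ δ := hz2
  have hπz : ‖(Submodule.Quotient.mk z : X ⧸ Y)‖ ≤ δ := by
    have h0 : (Submodule.Quotient.mk (y₁ : X) : X ⧸ Y) = 0 :=
      (Submodule.Quotient.mk_eq_zero Y).mpr y₁.2
    have heq : (Submodule.Quotient.mk ((y₁ : X) - z) : X ⧸ Y) = -(Submodule.Quotient.mk z) := by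
      rw [Submodule.Quotient.mk_sub, h0, zero_sub]
    rw [heq, norm_neg] at hz2'
    have := norm_nonneg (φ ((y₁ : X) - z))
    linarith
  have hφy₁z : ‖φ ((y₁ : X) - z)‖ ≤ δ := by
    have := norm_nonneg (Submodule.Quotient.mk ((y₁ : X) - z) : X ⧸ Y)
    linarith
  -- Step 4: z is close to Y
  obtain ⟨m, hm1, hm2⟩ := Submodule.Quotient.norm_mk_lt (Submodule.Quotient.mk z : X ⧸ Y) hδpos
  have hmY : m - z ∈ Y := (Submodule.Quotient.eq Y).mp hm1
  have hmnorm : ‖m‖ < 2 * δ := by linarith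
  set w : X := z - m with hw
  have hwY : w ∈ Y := by
    have := Y.neg_mem hmY
    simpa [hw, neg_sub] using this
  have hwz : ‖z - w‖ < 2 * δ := by simpa [hw] using hmnorm
  have hwdiff : |‖w‖ - 1| < 2 * δ := by
    calc |‖w‖ - 1| ≤ ‖w - z‖ := by
          have h := abs_norm_sub_norm_le w z
          rwa [hz1] at h
    _ = ‖z - w‖ := norm_sub_rev _ _
    _ < 2 * δ := hwz
  have hwnorm_lb : 1 - 2 * δ < ‖w‖ := by
    have := (abs_lt.mp hwdiff).1
    linarith
  have hwpos : 0 < ‖w‖ := by linarith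
  set y : X := ((‖w‖⁻¹ : ℝ) : ℂ) • w with hy
  have hyY : y ∈ Y := Y.smul_mem _ hwY
  have hynorm : ‖y‖ = 1 := by
    rw [hy, norm_smul, Complex.norm_real, Real.norm_eq_abs, abs_of_pos (by positivity)]
    exact inv_mul_cancel₀ (ne_of_gt hwpos)
  have hwy : ‖w - y‖ < 2 * δ := by
    have : w - y = ((1 - ‖w‖⁻¹ : ℝ) : ℂ) • w := by
      rw [hy]; push_cast; rw [sub_smul, one_smul]
    rw [this, norm_smul, Complex.norm_real, Real.norm_eq_abs]
    have : |1 - ‖w‖⁻¹| * ‖w‖ = |‖w‖ - 1| := by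
      rw [← abs_of_pos hwpos, ← abs_mul, abs_of_pos hwpos]
      congr 1
      field_simp
    rw [this]
    exact hwdiff
  have hzy : ‖z - y‖ < 4 * δ := by
    calc ‖z - y‖ ≤ ‖z - w‖ + ‖w - y‖ := by
          have : z - y = (z - w) + (w - y) := by abel
          rw [this]; exact norm_add_le _ _
    _ < 4 * δ := by linarith
  refine ⟨⟨y, hyY⟩, hynorm, ?_, ?_⟩
  · -- real part estimate
    have hψy : ψ ⟨y, hyY⟩ = φ y := (hφext ⟨y, hyY⟩).symm
    have hφy₁ : φ (y₁ : X) = ψ y₁ := hφext y₁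
    have hdecomp : φ y = φ (y₁ : X) - φ ((y₁ : X) - z) - φ (z - y) := by
      rw [← map_sub, ← map_sub]
      congr 1
      abel
    have hb1 : |(φ ((y₁ : X) - z)).re| ≤ δ :=
      le_trans (Complex.abs_re_le_norm _) hφy₁z
    have hb2 : |(φ (z - y)).re| ≤ 4 * δ := by
      refine le_trans (Complex.abs_re_le_norm _) ?_
      calc ‖φ (z - y)‖ ≤ ‖φ‖ * ‖z - y‖ := φ.le_opNorm _
      _ ≤ 4 * δ := by rw [hφnorm, one_mul]; linarith
    have := abs_le.mp hb1
    have := abs_le.mp hb2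
    rw [hψy, hdecomp]
    simp only [Complex.sub_re]
    rw [hφy₁]
    linarith [hre_y₁, (abs_le.mp hb1).1, (abs_le.mp hb2).1]
  · -- norm estimate
    have h : ‖x + z‖ ≤ ‖x + y‖ + ‖z - y‖ := by
      have e : x + z = (x + y) + (z - y) := by abel
      rw [e]; exact norm_add_le _ _
    show 2 - ε ≤ ‖x + y‖
    linarith
end

section
/- Let X be a Banach space with the Daugavet property and Y a rich subspace of X. Then Y has the Daugavet property. -/
/-- Auxiliary: a unit vector on which a functional nearly attains its norm, with real
positive value. -/
lemma aux_exists_unit_re_ge {Y : Type*} [NormedAddCommGroup Y] [NormedSpace ℂ Y]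
    (ψ : Y →L[ℂ] ℂ) {r : ℝ} (hr0 : 0 < r) (hr : r < ‖ψ‖) :
    ∃ y : Y, ‖y‖ = 1 ∧ r ≤ (ψ y).re := by
  obtain ⟨u, hu1, hu2⟩ := ψ.exists_lt_apply_of_lt_opNorm hr
  have hcpos : 0 < ‖ψ u‖ := hr0.trans hu2
  have hupos : 0 < ‖u‖ := by
    rcases eq_or_ne u 0 with h | h
    · exfalso; rw [h] at hu2; simp at hu2; linarith
    · exact norm_pos_iff.mpr h
  set c : ℂ := ψ u with hc
  set s : ℂ := ((↑(‖u‖ * ‖c‖) : ℂ))⁻¹ * (starRingEnd ℂ) c with hs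
  have hns : Complex.normSq c = ‖c‖ ^ 2 := by
    rw [Complex.normSq_eq_norm_sq]
  refine ⟨s • u, ?_, ?_⟩
  · rw [norm_smul, hs, norm_mul, norm_inv, RCLike.norm_conj, Complex.norm_real,
      Real.norm_eq_abs, abs_of_pos (by positivity : (0:ℝ) < ‖u‖ * ‖c‖)]
    have habs : (0:ℝ) < ‖c‖ := hcpos
    field_simp [hupos.ne', habs.ne']
  · have hval : ψ (s • u) = (((‖u‖ * ‖c‖)⁻¹ * Complex.normSq c : ℝ) : ℂ) := by
      rw [map_smul, smul_eq_mul, ← hc, hs, mul_assoc, mul_comm ((starRingEnd ℂ) c) c,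
        Complex.mul_conj]
      push_cast
      ring
    rw [hval, Complex.ofReal_re, hns]
    have heq : (‖u‖ * ‖c‖)⁻¹ * ‖c‖ ^ 2 = ‖c‖ / ‖u‖ := by
      have habs : (0:ℝ) < ‖c‖ := hcpos
      field_simp [hupos.ne', habs.ne']
    rw [heq]
    have h2 : ‖c‖ ≤ ‖c‖ / ‖u‖ := by
      rw [le_div_iff₀ hupos]
      nlinarith
    linarith

/-- Auxiliary: lower bound for `‖y + s • x₀‖` when `‖y + x₀‖` is nearly `2`. -/
lemma aux_norm_add_smul {Z : Type*} [SeminormedAddCommGroup Z] [NormedSpace ℝ Z]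
    {x₀ y : Z} (hx : ‖x₀‖ = 1) (hy : ‖y‖ = 1) {η s : ℝ} (hη : 0 ≤ η) (hs : 0 ≤ s)
    (h : 2 - η ≤ ‖y + x₀‖) : 1 + s - (1 + s) * η ≤ ‖y + s • x₀‖ := by
  rcases le_or_gt s 1 with hs1 | hs1
  · have h1 : ‖y + x₀‖ ≤ ‖y + s • x₀‖ + (1 - s) := by
      have hd : y + x₀ = (y + s • x₀) + (1 - s) • x₀ := by module
      rw [hd]
      refine (norm_add_le _ _).trans ?_
      rw [norm_smul, hx, mul_one, Real.norm_eq_abs, abs_of_nonneg (by linarith)]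
    nlinarith
  · have h1 : s * ‖y + x₀‖ ≤ ‖y + s • x₀‖ + (s - 1) := by
      have hd : s • (y + x₀) = (y + s • x₀) + (s - 1) • y := by module
      calc s * ‖y + x₀‖ = ‖s • (y + x₀)‖ := by
            rw [norm_smul, Real.norm_eq_abs, abs_of_nonneg hs]
        _ = ‖(y + s • x₀) + (s - 1) • y‖ := by rw [hd]
        _ ≤ ‖y + s • x₀‖ + (s - 1) := by
            refine (norm_add_le _ _).trans ?_
            rw [norm_smul, hy, mul_one, Real.norm_eq_abs, abs_of_nonneg (by linarith)]
    nlinarith [mul_le_mul_of_nonneg_left h hs]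

set_option maxHeartbeats 4000000 in
/-- A rich closed subspace of a Banach space with the Daugavet property
itself has the Daugavet property. -/
theorem rich_subspace_daugavetProperty
    {X : Type*} [NormedAddCommGroup X] [NormedSpace ℂ X] [CompleteSpace X]
    (hX : DaugavetProperty X)
    (Y : Submodule ℂ X) (hYclosed : IsClosed (Y : Set X))
    (hYrich : IsRichSubspace Y) :
    DaugavetProperty Y := by
  intro ψ v hS
  have hNval : ‖ψ.smulRight v‖ = ‖ψ‖ * ‖v‖ := ψ.norm_smulRight_apply v
  have hNpos : 0 < ‖ψ‖ * ‖v‖ := by rw [← hNval]; exact norm_pos_iff.mpr hS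
  have hPpos : 0 < ‖ψ‖ := by
    rcases mul_pos_iff.mp hNpos with ⟨h, _⟩ | ⟨h, _⟩
    · exact h
    · exact absurd h (not_lt.mpr (norm_nonneg _))
  have hVpos : 0 < ‖v‖ := by
    rcases mul_pos_iff.mp hNpos with ⟨_, h⟩ | ⟨_, h⟩
    · exact h
    · exact absurd h (not_lt.mpr (norm_nonneg _))
  set P := ‖ψ‖ with hPdef
  set V := ‖v‖ with hVdef
  set x₀ : Y := V⁻¹ • v with hx₀def
  have hx₀ : ‖x₀‖ = 1 := by
    rw [hx₀def, norm_smul, Real.norm_eq_abs, abs_inv, abs_of_pos hVpos, ← hVdef]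
    field_simp
  obtain ⟨Φ, hΦ, hΦn⟩ := exists_extension_norm_eq Y ψ
  -- Key claim: points of the unit sphere of Y nearly norming ψ and nearly diametral to x₀
  have key : ∀ η : ℝ, 0 < η → ∃ y : Y, ‖y‖ = 1 ∧ P - η ≤ (ψ y).re ∧ 2 - η ≤ ‖y + x₀‖ := by
    intro η hη
    set η' := min (min η 1) P with hη'def
    have hη'pos : 0 < η' := lt_min (lt_min hη one_pos) hPpos
    have hη'η : η' ≤ η := (min_le_left _ _).trans (min_le_left _ _)
    have hη'1 : η' ≤ 1 := (min_le_left _ _).trans (min_le_right _ _)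
    have hη'P : η' ≤ P := min_le_right _ _
    set δ := η' / (20 * (1 + P)) with hδdef
    have hδpos : 0 < δ := by positivity
    have hδval : 20 * (1 + P) * δ = η' := by
      rw [hδdef]; field_simp
    have hδ20 : δ ≤ 1 / 20 := by
      rw [hδdef, div_le_div_iff₀ (by positivity) (by norm_num)]
      nlinarith
    obtain ⟨y₁, hy₁, hy₁re⟩ := aux_exists_unit_re_ge ψ (r := P - η' / 2)
      (by linarith) (by rw [← hPdef]; linarith)
    obtain ⟨z, hz1, hz2, hz3⟩ := hYrich (↑x₀) (↑y₁)
      (by rw [Submodule.norm_coe]; exact hx₀) (by rw [Submodule.norm_coe]; exact hy₁)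
      Φ δ hδpos
    have hΦyz : ‖Φ ((↑y₁ : X) - z)‖ ≤ δ := by
      have := norm_nonneg ((fun x : X => (Submodule.Quotient.mk x : X ⧸ Y)) ((↑y₁ : X) - z))
      linarith
    have hqz : ‖(Submodule.Quotient.mk z : X ⧸ Y)‖ ≤ δ := by
      have h0 : (Submodule.Quotient.mk ((↑y₁ : X) - z) : X ⧸ Y) =
          -(Submodule.Quotient.mk z) := by
        rw [Submodule.Quotient.mk_sub, (Submodule.Quotient.mk_eq_zero Y).mpr y₁.2, zero_sub]
      have h1 := norm_nonneg (Φ ((↑y₁ : X) - z))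
      have h2 : ‖(Submodule.Quotient.mk ((↑y₁ : X) - z) : X ⧸ Y)‖ =
          ‖(Submodule.Quotient.mk z : X ⧸ Y)‖ := by rw [h0, norm_neg]
      simp only [h2] at hz2
      linarith
    obtain ⟨m, hm1, hm2⟩ := Submodule.Quotient.norm_mk_lt
      (Submodule.Quotient.mk z : X ⧸ Y) hδpos
    have hm : ‖m‖ < 2 * δ := by linarith
    have hwY : z - m ∈ Y := by
      have := (Submodule.Quotient.eq Y).mp hm1.symm
      exact this
    set w : Y := ⟨z - m, hwY⟩ with hwdef
    have hwnorm : ‖w‖ = ‖z - m‖ := rfl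
    have hτ1 : |‖z - m‖ - 1| ≤ 2 * δ := by
      have h1 : |‖z - m‖ - ‖z‖| ≤ ‖(z - m) - z‖ := abs_norm_sub_norm_le _ _
      have h2 : ‖(z - m) - z‖ = ‖m‖ := by rw [show (z - m) - z = -m by abel, norm_neg]
      rw [hz1] at h1; rw [h2] at h1; linarith
    have hτlb : 1 - 2 * δ ≤ ‖z - m‖ := by
      have := abs_le.mp hτ1; linarith [this.1]
    have hτub : ‖z - m‖ ≤ 1 + 2 * δ := by
      have := abs_le.mp hτ1; linarith [this.2]
    have hτpos : 0 < ‖z - m‖ := by linarith [hδ20]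
    -- functional value on w
    have hΦw : P - η' / 2 - δ - 2 * δ * P ≤ (Φ (z - m)).re := by
      have hΦy₁ : (Φ (↑y₁ : X)).re = (ψ y₁).re := by rw [hΦ y₁]
      have h1 : (Φ (↑y₁ : X)).re - (Φ z).re ≤ δ := by
        have hre : (Φ ((↑y₁ : X) - z)).re ≤ ‖Φ ((↑y₁ : X) - z)‖ := by
          exact Complex.re_le_norm _
        have hsubre : (Φ ((↑y₁ : X) - z)).re = (Φ (↑y₁ : X)).re - (Φ z).re := by
          rw [map_sub, Complex.sub_re]
        linarith [hsubre ▸ hre, hΦyz]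
      have h2 : (Φ z).re - (Φ (z - m)).re ≤ 2 * δ * P := by
        have hb : (Φ m).re ≤ ‖Φ m‖ := by
          exact Complex.re_le_norm _
        have hΦm : ‖Φ m‖ ≤ P * ‖m‖ := by
          have := Φ.le_opNorm m; rw [hΦn] at this; exact this
        have hsubre : (Φ (z - m)).re = (Φ z).re - (Φ m).re := by
          rw [map_sub, Complex.sub_re]
        nlinarith [hb, hΦm, hm, hPpos]
      have h3 : P - η' / 2 ≤ (Φ (↑y₁ : X)).re := by rw [hΦy₁]; exact hy₁re
      linarith
    have hxw : 2 - 3 * δ ≤ ‖(↑x₀ : X) + (z - m)‖ := by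
      have h1 : ‖(↑x₀ : X) + z‖ - ‖m‖ ≤ ‖(↑x₀ : X) + (z - m)‖ := by
        have h0 := norm_sub_norm_le ((↑x₀ : X) + z) m
        have he : (↑x₀ : X) + z - m = (↑x₀ : X) + (z - m) := by abel
        rw [he] at h0
        linarith
      linarith
    -- normalize
    set τ := ‖z - m‖ with hτdef
    set y : Y := τ⁻¹ • w with hydef
    have hwn : ‖w‖ = τ := hwnorm
    have hy : ‖y‖ = 1 := by
      rw [hydef, norm_smul, Real.norm_eq_abs, abs_inv, abs_of_pos hτpos, hwn]
      field_simp
    have hyw : ‖y - w‖ ≤ 2 * δ := by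
      have hd : y - w = (τ⁻¹ - 1) • w := by rw [hydef, sub_smul, one_smul]
      rw [hd, norm_smul, hwn, Real.norm_eq_abs]
      calc |τ⁻¹ - 1| * τ = |(τ⁻¹ - 1) * τ| := by
            rw [abs_mul, abs_of_pos hτpos]
        _ = |1 - τ| := by congr 1; field_simp
        _ ≤ 2 * δ := by rw [abs_sub_comm]; exact hτ1
    have hψyw : ‖ψ (y - w)‖ ≤ P * (2 * δ) := by
      have := ψ.le_opNorm (y - w)
      rw [← hPdef] at this
      nlinarith [norm_nonneg (y - w)]
    have hψw : (ψ w).re = (Φ (z - m)).re := by rw [← hΦ w]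
    have hyre : P - η' ≤ (ψ y).re := by
      have h1 : (ψ w).re - (ψ y).re ≤ P * (2 * δ) := by
        have hb : (ψ (w - y)).re ≤ ‖ψ (w - y)‖ := by
          exact Complex.re_le_norm _
        have h2 : ‖ψ (w - y)‖ = ‖ψ (y - w)‖ := by
          rw [show w - y = -(y - w) by abel, map_neg, norm_neg]
        have hsubre : (ψ (w - y)).re = (ψ w).re - (ψ y).re := by
          rw [map_sub, Complex.sub_re]
        rw [h2, hsubre] at hb
        linarith
      have hδP : δ * (1 + 4 * P) ≤ η' / 2 := by nlinarith
      rw [hψw] at h1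
      nlinarith
    have hyx : 2 - η' ≤ ‖y + x₀‖ := by
      have h1 : ‖w + x₀‖ - ‖y - w‖ ≤ ‖y + x₀‖ := by
        have h0 := norm_sub_norm_le (w + x₀) (y + x₀)
        have he : (w + x₀) - (y + x₀) = -(y - w) := by abel
        rw [he, norm_neg] at h0
        linarith
      have h2 : ‖w + x₀‖ = ‖(↑x₀ : X) + (z - m)‖ := by
        rw [Submodule.coe_norm, Submodule.coe_add, add_comm]
      have h5 : 5 * δ ≤ η' := by nlinarith
      rw [h2] at h1
      linarith
    exact ⟨y, hy, by linarith, by linarith⟩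
  -- Lower bound
  have lower : ∀ ε : ℝ, 0 < ε →
      1 + P * V - ε ≤ ‖ContinuousLinearMap.id ℂ ↥Y + ψ.smulRight v‖ := by
    intro ε hε
    set η := min (min (ε / (3 * (1 + V + P * V))) ((ε / (3 * V + 3)) ^ 2 / (2 * P))) (P / 2)
      with hηdef
    have hηpos : 0 < η := by
      apply lt_min (lt_min _ _) (by positivity) <;> positivity
    obtain ⟨y, hy, hyre, hyx⟩ := key η hηpos
    set a := (ψ y).re with hadef
    set b := (ψ y).im with hbdef
    have hηP : η ≤ P / 2 := min_le_right _ _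
    have hη1 : η ≤ ε / (3 * (1 + V + P * V)) := (min_le_left _ _).trans (min_le_left _ _)
    have hη2 : η ≤ (ε / (3 * V + 3)) ^ 2 / (2 * P) := (min_le_left _ _).trans (min_le_right _ _)
    have habs : ‖ψ y‖ ≤ P := by
      have := ψ.le_opNorm y
      rw [hy, mul_one, ← hPdef] at this
      exact this
    have haP : a ≤ P := le_trans (Complex.re_le_norm _) habs
    have ha0 : 0 ≤ a := by linarith
    have hb : |b| ≤ Real.sqrt (2 * P * η) := by
      apply Real.abs_le_sqrt
      have h2 : a ^ 2 + b ^ 2 ≤ P ^ 2 := by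
        have hsq := Complex.sq_norm (ψ y)
        rw [Complex.normSq_apply] at hsq
        nlinarith [norm_nonneg (ψ y)]
      nlinarith
    have hsq : Real.sqrt (2 * P * η) ≤ ε / (3 * V + 3) := by
      have h1 : 2 * P * η ≤ (ε / (3 * V + 3)) ^ 2 := by
        calc 2 * P * η ≤ 2 * P * ((ε / (3 * V + 3)) ^ 2 / (2 * P)) := by
              apply mul_le_mul_of_nonneg_left hη2 (by positivity)
          _ = (ε / (3 * V + 3)) ^ 2 := by field_simp
      calc Real.sqrt (2 * P * η) ≤ Real.sqrt ((ε / (3 * V + 3)) ^ 2) := Real.sqrt_le_sqrt h1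
        _ = ε / (3 * V + 3) := Real.sqrt_sq (by positivity)
    -- splitting the operator value
    have happ : (ContinuousLinearMap.id ℂ ↥Y + ψ.smulRight v) y = y + ψ y • v := by
      simp [ContinuousLinearMap.smulRight_apply]
    have hdecomp : y + ψ y • v = (y + a • v) + ((↑b * Complex.I : ℂ)) • v := by
      have ht : ψ y = (↑a : ℂ) + ↑b * Complex.I := (Complex.re_add_im _).symm
      rw [ht, add_smul, Complex.coe_smul]
      abel
    have hIb : ‖((↑b * Complex.I : ℂ)) • v‖ = |b| * V := by
      rw [norm_smul, norm_mul, Complex.norm_real, Complex.norm_I, mul_one,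
        Real.norm_eq_abs, ← hVdef]
    have hsplit : ‖y + a • v‖ - |b| * V ≤ ‖y + ψ y • v‖ := by
      have h1 : ‖y + a • v‖ ≤ ‖y + ψ y • v‖ + ‖((↑b * Complex.I : ℂ)) • v‖ := by
        have he : y + a • v = (y + ψ y • v) - ((↑b * Complex.I : ℂ)) • v := by
          rw [hdecomp]; abel
        rw [he]
        exact norm_sub_le _ _
      rw [hIb] at h1; linarith
    have hsmul : y + a • v = y + (a * V) • x₀ := by
      rw [hx₀def, smul_smul]
      congr 2
      field_simp
    have hmain : 1 + a * V - (1 + a * V) * η ≤ ‖y + (a * V) • x₀‖ :=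
      aux_norm_add_smul hx₀ hy hηpos.le (mul_nonneg ha0 hVpos.le) hyx
    have hop : ‖y + ψ y • v‖ ≤ ‖ContinuousLinearMap.id ℂ ↥Y + ψ.smulRight v‖ := by
      rw [← happ]
      exact (ContinuousLinearMap.id ℂ ↥Y + ψ.smulRight v).unit_le_opNorm y (le_of_eq hy)
    -- numeric bookkeeping
    have hbV : |b| * V ≤ ε / 3 := by
      have h1 : |b| ≤ ε / (3 * V + 3) := hb.trans hsq
      have h2 : |b| * V ≤ (ε / (3 * V + 3)) * V := mul_le_mul_of_nonneg_right h1 hVpos.le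
      have h3 : (ε / (3 * V + 3)) * V ≤ ε / 3 := by
        rw [div_mul_eq_mul_div, div_le_div_iff₀ (by positivity) (by norm_num)]
        nlinarith
      linarith
    have h1N : (1 + a * V) * η ≤ ε / 3 := by
      have h1 : 1 + a * V ≤ 1 + V + P * V := by nlinarith
      calc (1 + a * V) * η ≤ (1 + V + P * V) * η := by
            apply mul_le_mul_of_nonneg_right h1 hηpos.le
        _ ≤ (1 + V + P * V) * (ε / (3 * (1 + V + P * V))) := by
            apply mul_le_mul_of_nonneg_left hη1 (by positivity)
        _ = ε / 3 := by field_simp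
    have hηV : η * V ≤ ε / 3 := by
      have h2 : η * V ≤ (ε / (3 * (1 + V + P * V))) * V :=
        mul_le_mul_of_nonneg_right hη1 hVpos.le
      have h3 : (ε / (3 * (1 + V + P * V))) * V ≤ ε / 3 := by
        rw [div_mul_eq_mul_div, div_le_div_iff₀ (by positivity) (by norm_num)]
        nlinarith
      linarith
    have haV : P * V - η * V ≤ a * V := by nlinarith
    rw [hsmul] at hsplit
    linarith
  have upper : ‖ContinuousLinearMap.id ℂ ↥Y + ψ.smulRight v‖ ≤ 1 + ‖ψ.smulRight v‖ := by
    refine (ContinuousLinearMap.opNorm_add_le _ _).trans ?_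
    have := ContinuousLinearMap.norm_id_le (𝕜 := ℂ) (E := ↥Y)
    linarith
  have lower' : 1 + ‖ψ.smulRight v‖ ≤ ‖ContinuousLinearMap.id ℂ ↥Y + ψ.smulRight v‖ := by
    rw [hNval]
    exact le_of_forall_sub_le lower
  linarith
end

section
/- Let G be an infinite compact abelian group with dual group Γ and Λ ⊆ Γ. Suppose that for every x ∈ G, every open neighborhood O of the identity e_G, and every ε > 0 there exists a real-valued non-negative f in the unit sphere of C(G) with f(x) = 1, f vanishing outside x + O, and d(f, C_Λ(G)) ≤ ε (this holds whenever C_Λ(G) is a rich subspace of C(G)). Then every measure μ ∈ M(G) annihilating C_Λ(G) is diffuse, i.e., μ({x}) = 0 for every x ∈ G. -/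
open MeasureTheory Metric

noncomputable section

/-- A *character* of `G`: a continuous function `γ : G → ℂ` that is multiplicative from `(G,+)`
to `(ℂ,*)` and takes values in the unit circle. -/
def IsChar {G : Type*} [AddCommGroup G] [TopologicalSpace G] (γ : C(G, ℂ)) : Prop :=
  (∀ x y : G, γ (x + y) = γ x * γ y) ∧ ∀ x : G, ‖γ x‖ = 1

/-- The Fourier coefficient `f̂(γ) = ∫ f ⬝ conj γ dm`. -/
def fourCoeff {G : Type*} [TopologicalSpace G] [MeasurableSpace G]
    (m : Measure G) (f : G → ℂ) (γ : C(G, ℂ)) : ℂ :=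
  ∫ x, f x * (starRingEnd ℂ) (γ x) ∂m

/-- `C_Λ(G) = {f ∈ C(G) : f̂(γ) = 0 for every character γ ∉ Λ}`. -/
def CLam {G : Type*} [AddCommGroup G] [TopologicalSpace G] [MeasurableSpace G]
    (m : Measure G) (Λ : Set C(G, ℂ)) : Set C(G, ℂ) :=
  {f | ∀ γ : C(G, ℂ), IsChar γ → γ ∉ Λ → fourCoeff m (f : G → ℂ) γ = 0}

/-- The integral of a function against a complex measure, via the Jordan decompositions of its
real and imaginary parts. -/
def cmIntegral {G : Type*} [MeasurableSpace G] (μ : ComplexMeasure G) (f : G → ℂ) : ℂ :=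
  (∫ x, f x ∂μ.re.toJordanDecomposition.posPart) -
  (∫ x, f x ∂μ.re.toJordanDecomposition.negPart) +
  Complex.I * ((∫ x, f x ∂μ.im.toJordanDecomposition.posPart) -
    (∫ x, f x ∂μ.im.toJordanDecomposition.negPart))

/-- A complex measure is *regular* if the four parts of its Jordan decompositions are. -/
def cmRegular {G : Type*} [MeasurableSpace G] [TopologicalSpace G]
    (μ : ComplexMeasure G) : Prop :=
  μ.re.toJordanDecomposition.posPart.Regular ∧ μ.re.toJordanDecomposition.negPart.Regular ∧
  μ.im.toJordanDecomposition.posPart.Regular ∧ μ.im.toJordanDecomposition.negPart.Regular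

section Aux

variable {G : Type*} [TopologicalSpace G] [MeasurableSpace G] [OpensMeasurableSpace G]
  [CompactSpace G]

lemma aux_integrable (ν : Measure G) [IsFiniteMeasure ν] (f : C(G, ℂ)) :
    Integrable (fun y => f y) ν :=
  f.continuous.integrable_of_hasCompactSupport (isClosed_tsupport _).isCompact

lemma aux_norm_combo (z₁ z₂ z₃ z₄ : ℂ) :
    ‖z₁ - z₂ + Complex.I * (z₃ - z₄)‖ ≤ ‖z₁‖ + ‖z₂‖ + ‖z₃‖ + ‖z₄‖ := by
  calc ‖z₁ - z₂ + Complex.I * (z₃ - z₄)‖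
      ≤ ‖z₁ - z₂‖ + ‖Complex.I * (z₃ - z₄)‖ := norm_add_le _ _
    _ = ‖z₁ - z₂‖ + ‖z₃ - z₄‖ := by rw [norm_mul, Complex.norm_I, one_mul]
    _ ≤ (‖z₁‖ + ‖z₂‖) + (‖z₃‖ + ‖z₄‖) := add_le_add (norm_sub_le _ _) (norm_sub_le _ _)
    _ = _ := by ring

lemma aux_peak_integral (ν : Measure G) [IsFiniteMeasure ν]
    {x : G} (hx : MeasurableSet ({x} : Set G)) {U : Set G} (hU : IsOpen U)
    {f : C(G, ℂ)} (hf1 : ‖f‖ = 1) (hfx : f x = 1) (hfU : ∀ y, y ∉ U → f y = 0) :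
    ‖(∫ y, f y ∂ν) - ((ν {x}).toReal : ℂ)‖ ≤ (ν (U \ {x})).toReal := by
  have hint : Integrable (fun y => f y) ν := aux_integrable ν f
  have h1 : (∫ y in ({x} : Set G), f y ∂ν) = ((ν {x}).toReal : ℂ) := by
    rw [setIntegral_congr_fun hx (g := fun _ => (1 : ℂ)) (fun y hy => by
      rcases hy with rfl; exact hfx)]
    simp [setIntegral_const]
  have h2 : (∫ y, f y ∂ν) - ((ν {x}).toReal : ℂ) = ∫ y in ({x} : Set G)ᶜ, f y ∂ν := by
    rw [← h1, ← integral_add_compl hx hint]; ring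
  have h3 : (∫ y in ({x} : Set G)ᶜ, f y ∂ν) = ∫ y in ({x} : Set G)ᶜ ∩ U, f y ∂ν := by
    calc (∫ y in ({x} : Set G)ᶜ, f y ∂ν)
        = ∫ y in ({x} : Set G)ᶜ, U.indicator (fun z => f z) y ∂ν :=
          integral_congr_ae (Filter.Eventually.of_forall fun y => by
            by_cases hy : y ∈ U
            · simp [Set.indicator_of_mem hy]
            · simp [Set.indicator_of_notMem hy, hfU y hy])
      _ = _ := setIntegral_indicator hU.measurableSet
  rw [h2, h3]
  have hb : ∀ y ∈ ({x} : Set G)ᶜ ∩ U, ‖f y‖ ≤ 1 := fun y _ => by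
    simpa [hf1] using f.norm_coe_le_norm y
  calc ‖∫ y in ({x} : Set G)ᶜ ∩ U, f y ∂ν‖
      ≤ 1 * (ν (({x} : Set G)ᶜ ∩ U)).toReal :=
        norm_setIntegral_le_of_norm_le_const (measure_lt_top _ _) hb
    _ = (ν (U \ {x})).toReal := by rw [one_mul, Set.inter_comm, Set.diff_eq]

lemma aux_total_bound (ν : Measure G) [IsFiniteMeasure ν] (f g : C(G, ℂ)) {C : ℝ}
    (hC : dist f g ≤ C) :
    ‖(∫ y, f y ∂ν) - ∫ y, g y ∂ν‖ ≤ C * (ν Set.univ).toReal := by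
  rw [← integral_sub (aux_integrable ν f) (aux_integrable ν g)]
  refine norm_integral_le_of_norm_le_const (Filter.Eventually.of_forall fun y => ?_)
  calc ‖f y - g y‖ = ‖(f - g) y‖ := by simp
    _ ≤ ‖f - g‖ := (f - g).norm_coe_le_norm y
    _ = dist f g := (dist_eq_norm f g).symm
    _ ≤ C := hC

lemma aux_signed_apply {s : SignedMeasure G} {i : Set G} (hi : MeasurableSet i) :
    s i = (s.toJordanDecomposition.posPart i).toReal -
      (s.toJordanDecomposition.negPart i).toReal := by
  conv_lhs => rw [← s.toSignedMeasure_toJordanDecomposition]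
  rw [JordanDecomposition.toSignedMeasure, Measure.toSignedMeasure_sub_apply hi]
  rfl

end Aux

/-- Suppose that for every `x ∈ G`, every open neighborhood `O` of `0` and
every `ε > 0` there is a real-valued, non-negative, norm-one `f ∈ C(G)` with `f x = 1`,
vanishing outside `x + O`, at sup-distance at most `ε` from `C_Λ(G)` (this holds whenever
`C_Λ(G)` is a rich subspace of `C(G)`).  Then every regular complex Borel measure annihilating
`C_Λ(G)` is diffuse. -/
theorem annihilator_of_rich_CLam_diffuse
    {G : Type*} [AddCommGroup G] [TopologicalSpace G] [IsTopologicalAddGroup G]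
    [CompactSpace G] [MeasurableSpace G] [BorelSpace G] [Infinite G]
    (m : Measure G) [m.IsAddHaarMeasure] [IsProbabilityMeasure m]
    (Λ : Set C(G, ℂ))
    (hpeak : ∀ x : G, ∀ O : Set G, IsOpen O → (0 : G) ∈ O → ∀ ε : ℝ, 0 < ε →
      ∃ f : C(G, ℂ), ‖f‖ = 1 ∧ (∀ y : G, (f y).im = 0 ∧ 0 ≤ (f y).re) ∧ f x = 1 ∧
        (∀ y : G, y - x ∉ O → f y = 0) ∧ infDist f (CLam m Λ) ≤ ε)
    (μ : ComplexMeasure G) (hreg : cmRegular μ)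
    (hann : ∀ f ∈ CLam m Λ, cmIntegral μ (f : G → ℂ) = 0) :
    ∀ x : G, μ {x} = 0 := by
  intro x
  by_cases hx : MeasurableSet ({x} : Set G)
  swap
  · exact μ.not_measurable hx
  obtain ⟨hr₁, hr₂, hr₃, hr₄⟩ := hreg
  set ν₁ := μ.re.toJordanDecomposition.posPart with hν₁
  set ν₂ := μ.re.toJordanDecomposition.negPart with hν₂
  set ν₃ := μ.im.toJordanDecomposition.posPart with hν₃
  set ν₄ := μ.im.toJordanDecomposition.negPart with hν₄
  haveI : Measure.OuterRegular ν₁ := hr₁.toOuterRegular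
  haveI : Measure.OuterRegular ν₂ := hr₂.toOuterRegular
  haveI : Measure.OuterRegular ν₃ := hr₃.toOuterRegular
  haveI : Measure.OuterRegular ν₄ := hr₄.toOuterRegular
  set M : ℝ := (ν₁ Set.univ).toReal + (ν₂ Set.univ).toReal + (ν₃ Set.univ).toReal +
    (ν₄ Set.univ).toReal with hM
  have hM0 : 0 ≤ M := by positivity
  -- it suffices to bound the norm by every positive δ
  rw [← norm_le_zero_iff]
  refine le_of_forall_pos_le_add ?_
  intro δ hδ
  rw [zero_add]
  set δ' : ℝ := δ / 8 with hδ'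
  have hδ'0 : 0 < δ' := by positivity
  set ε : ℝ := δ / (4 * (M + 1)) with hε
  have hε0 : 0 < ε := by positivity
  -- choose open neighborhoods via outer regularity
  have hfind : ∀ (ν : Measure G) [IsFiniteMeasure ν] [Measure.OuterRegular ν],
      ∃ U : Set G, x ∈ U ∧ IsOpen U ∧ ν U < ν {x} + ENNReal.ofReal δ' := by
    intro ν _ _
    have hlt : ν {x} < ν {x} + ENNReal.ofReal δ' :=
      ENNReal.lt_add_right (measure_ne_top ν _) (by simp [ENNReal.ofReal_pos, hδ'0])
    obtain ⟨U, hUx, hUo, hUν⟩ := Set.exists_isOpen_lt_of_lt {x} _ hlt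
    exact ⟨U, hUx rfl, hUo, hUν⟩
  obtain ⟨U₁, hU₁x, hU₁o, hU₁⟩ := hfind ν₁
  obtain ⟨U₂, hU₂x, hU₂o, hU₂⟩ := hfind ν₂
  obtain ⟨U₃, hU₃x, hU₃o, hU₃⟩ := hfind ν₃
  obtain ⟨U₄, hU₄x, hU₄o, hU₄⟩ := hfind ν₄
  set U : Set G := U₁ ∩ U₂ ∩ U₃ ∩ U₄ with hUdef
  have hUo : IsOpen U := ((hU₁o.inter hU₂o).inter hU₃o).inter hU₄o
  have hUx : x ∈ U := ⟨⟨⟨hU₁x, hU₂x⟩, hU₃x⟩, hU₄x⟩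
  have hdiff : ∀ (ν : Measure G) [IsFiniteMeasure ν] (V : Set G), U ⊆ V →
      ν V < ν {x} + ENNReal.ofReal δ' → (ν (U \ {x})).toReal ≤ δ' := by
    intro ν _ V hUV hV
    have h2 : ν (U \ {x}) + ν {x} ≤ ν V := by
      rw [← measure_union disjoint_sdiff_self_left hx]
      exact measure_mono (by
        intro y hy
        rcases hy with hy | hy
        · exact hUV hy.1
        · rcases hy with rfl; exact hUV hUx)
    have h3 : ν {x} + ν (U \ {x}) < ν {x} + ENNReal.ofReal δ' := by
      rw [add_comm (ν {x}) (ν (U \ {x}))]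
      exact lt_of_le_of_lt h2 hV
    have h1 : ν (U \ {x}) ≤ ENNReal.ofReal δ' :=
      le_of_lt ((ENNReal.add_lt_add_iff_left (measure_ne_top ν {x})).mp h3)
    exact ENNReal.toReal_le_of_le_ofReal hδ'0.le h1
  have hd₁ : (ν₁ (U \ {x})).toReal ≤ δ' := hdiff ν₁ U₁ (fun y hy => hy.1.1.1) hU₁
  have hd₂ : (ν₂ (U \ {x})).toReal ≤ δ' := hdiff ν₂ U₂ (fun y hy => hy.1.1.2) hU₂
  have hd₃ : (ν₃ (U \ {x})).toReal ≤ δ' := hdiff ν₃ U₃ (fun y hy => hy.1.2) hU₃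
  have hd₄ : (ν₄ (U \ {x})).toReal ≤ δ' := hdiff ν₄ U₄ (fun y hy => hy.2) hU₄
  -- get the peak function
  set O : Set G := (· + x) ⁻¹' U with hO
  have hOopen : IsOpen O := hUo.preimage (continuous_id.add continuous_const)
  have hO0 : (0 : G) ∈ O := by simpa [hO] using hUx
  obtain ⟨f, hf1, -, hfx, hfvan, hfdist⟩ := hpeak x O hOopen hO0 ε hε0
  have hfU : ∀ y, y ∉ U → f y = 0 := by
    intro y hy
    refine hfvan y ?_
    simpa [hO, sub_add_cancel] using hy
  -- get a nearby g in CLam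
  have hCne : (CLam m Λ).Nonempty := ⟨0, fun γ _ _ => by simp [fourCoeff]⟩
  obtain ⟨g, hg, hfg⟩ : ∃ g ∈ CLam m Λ, dist f g < 2 * ε :=
    (infDist_lt_iff hCne).mp (lt_of_le_of_lt hfdist (by linarith))
  -- singleton estimates
  have E₁ := aux_peak_integral ν₁ hx hUo hf1 hfx hfU
  have E₂ := aux_peak_integral ν₂ hx hUo hf1 hfx hfU
  have E₃ := aux_peak_integral ν₃ hx hUo hf1 hfx hfU
  have E₄ := aux_peak_integral ν₄ hx hUo hf1 hfx hfU
  -- the measure at x as a complex number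
  have hμx : μ {x} = (((ν₁ {x}).toReal - (ν₂ {x}).toReal : ℝ) : ℂ) +
      Complex.I * (((ν₃ {x}).toReal - (ν₄ {x}).toReal : ℝ) : ℂ) := by
    refine Complex.ext ?_ ?_
    · show μ.re {x} = _
      rw [aux_signed_apply (s := μ.re) hx]
      simp [hν₁, hν₂]
    · show μ.im {x} = _
      rw [aux_signed_apply (s := μ.im) hx]
      simp [hν₃, hν₄]
  -- bound the difference between μ {x} and the integral of f
  have hA : cmIntegral μ (f : G → ℂ) = (∫ y, f y ∂ν₁) - (∫ y, f y ∂ν₂) +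
      Complex.I * ((∫ y, f y ∂ν₃) - (∫ y, f y ∂ν₄)) := rfl
  have hB : μ {x} - cmIntegral μ (f : G → ℂ) =
      (((ν₁ {x}).toReal : ℂ) - ∫ y, f y ∂ν₁) - (((ν₂ {x}).toReal : ℂ) - ∫ y, f y ∂ν₂) +
      Complex.I * ((((ν₃ {x}).toReal : ℂ) - ∫ y, f y ∂ν₃) -
        (((ν₄ {x}).toReal : ℂ) - ∫ y, f y ∂ν₄)) := by
    rw [hμx, hA]; push_cast; ring
  have hB' : ‖μ {x} - cmIntegral μ (f : G → ℂ)‖ ≤ δ / 2 := by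
    rw [hB]
    refine le_trans (aux_norm_combo _ _ _ _) ?_
    have e₁ : ‖(((ν₁ {x}).toReal : ℝ) : ℂ) - ∫ y, f y ∂ν₁‖ ≤ δ' := by
      rw [norm_sub_rev]; exact E₁.trans hd₁
    have e₂ : ‖(((ν₂ {x}).toReal : ℝ) : ℂ) - ∫ y, f y ∂ν₂‖ ≤ δ' := by
      rw [norm_sub_rev]; exact E₂.trans hd₂
    have e₃ : ‖(((ν₃ {x}).toReal : ℝ) : ℂ) - ∫ y, f y ∂ν₃‖ ≤ δ' := by
      rw [norm_sub_rev]; exact E₃.trans hd₃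
    have e₄ : ‖(((ν₄ {x}).toReal : ℝ) : ℂ) - ∫ y, f y ∂ν₄‖ ≤ δ' := by
      rw [norm_sub_rev]; exact E₄.trans hd₄
    rw [hδ'] at e₁ e₂ e₃ e₄
    linarith
  -- bound the integral of f via g
  have hgz : cmIntegral μ (g : G → ℂ) = 0 := hann g hg
  have hC : ‖cmIntegral μ (f : G → ℂ)‖ ≤ δ / 2 := by
    have hsub : cmIntegral μ (f : G → ℂ) =
        ((∫ y, f y ∂ν₁) - ∫ y, g y ∂ν₁) - ((∫ y, f y ∂ν₂) - ∫ y, g y ∂ν₂) +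
        Complex.I * (((∫ y, f y ∂ν₃) - ∫ y, g y ∂ν₃) -
          ((∫ y, f y ∂ν₄) - ∫ y, g y ∂ν₄)) := by
      have := hgz
      rw [show cmIntegral μ (f : G → ℂ) = cmIntegral μ (f : G → ℂ) - cmIntegral μ (g : G → ℂ) by
        rw [hgz, sub_zero]]
      rw [hA, show cmIntegral μ (g : G → ℂ) = (∫ y, g y ∂ν₁) - (∫ y, g y ∂ν₂) +
        Complex.I * ((∫ y, g y ∂ν₃) - (∫ y, g y ∂ν₄)) from rfl]
      ring
    rw [hsub]
    refine le_trans (aux_norm_combo _ _ _ _) ?_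
    have t₁ := aux_total_bound ν₁ f g hfg.le
    have t₂ := aux_total_bound ν₂ f g hfg.le
    have t₃ := aux_total_bound ν₃ f g hfg.le
    have t₄ := aux_total_bound ν₄ f g hfg.le
    have hMsum : (2 * ε) * (ν₁ Set.univ).toReal + (2 * ε) * (ν₂ Set.univ).toReal +
        (2 * ε) * (ν₃ Set.univ).toReal + (2 * ε) * (ν₄ Set.univ).toReal = 2 * ε * M := by
      rw [hM]; ring
    have hεM : 2 * ε * M ≤ δ / 2 := by
      have hεeq : ε * (4 * (M + 1)) = δ := by
        rw [hε]; field_simp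
      nlinarith [hε0.le, hM0]
    linarith
  calc ‖μ {x}‖ ≤ ‖μ {x} - cmIntegral μ (f : G → ℂ)‖ + ‖cmIntegral μ (f : G → ℂ)‖ := by
        simpa using norm_add_le (μ {x} - cmIntegral μ (f : G → ℂ)) (cmIntegral μ (f : G → ℂ))
    _ ≤ δ / 2 + δ / 2 := add_le_add hB' hC
    _ = δ := by ring
end
end

section
/- Let G be an infinite compact abelian group with dual Γ and Λ ⊆ Γ. For every f ∈ C(G), interpreted as a bounded linear functional on M(G) via μ ↦ ∫_G f dμ, the norm of the restriction of this functional to L¹_Λ(G) (viewed inside M(G) via g ↦ g dm) equals the norm of its restriction to M_Λ(G). -/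
open MeasureTheory

noncomputable section

section Aux

variable {G : Type*} [AddCommGroup G] [TopologicalSpace G] [IsTopologicalAddGroup G]
    [CompactSpace G] [MeasurableSpace G] [BorelSpace G]
    {m : Measure G} [m.IsAddHaarMeasure] [IsProbabilityMeasure m]

lemma contInt {E : Type*} [NormedAddCommGroup E] {h : G → E} (hh : Continuous h) :
    Integrable h m :=
  hh.integrable_of_hasCompactSupport (IsClosed.isCompact (isClosed_tsupport _))

lemma int_bound (g : Lp ℂ 1 m) (h : C(G, ℂ)) :
    ‖∫ x, h x * (g : G → ℂ) x ∂m‖ ≤ ‖h‖ * ‖g‖ := by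
  have hgi : Integrable (fun x => (g : G → ℂ) x) m := L1.integrable_coeFn g
  have hint : Integrable (fun x => h x * (g : G → ℂ) x) m :=
    hgi.bdd_mul h.continuous.aestronglyMeasurable (Filter.Eventually.of_forall fun x => h.norm_coe_le_norm x)
  calc ‖∫ x, h x * (g : G → ℂ) x ∂m‖ ≤ ∫ x, ‖h x * (g : G → ℂ) x‖ ∂m :=
        norm_integral_le_integral_norm _
    _ ≤ ∫ x, ‖h‖ * ‖(g : G → ℂ) x‖ ∂m := by
        refine integral_mono hint.norm (hgi.norm.const_mul _) fun x => ?_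
        rw [norm_mul]
        exact mul_le_mul_of_nonneg_right (h.norm_coe_le_norm x) (norm_nonneg _)
    _ = ‖h‖ * ∫ x, ‖(g : G → ℂ) x‖ ∂m := integral_const_mul _ _
    _ = ‖h‖ * ‖g‖ := by rw [L1.norm_eq_integral_norm]

end Aux

set_option linter.unusedSectionVars false
set_option maxHeartbeats 1000000

section Aux2

variable {G : Type*} [AddCommGroup G] [TopologicalSpace G] [IsTopologicalAddGroup G]
    [CompactSpace G] [MeasurableSpace G] [BorelSpace G]
    {m : Measure G} [m.IsAddHaarMeasure] [IsProbabilityMeasure m]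

lemma easy_dir (g : Lp ℂ 1 m) (hg1 : ‖g‖ ≤ 1) :
    ∃ Φ : C(G, ℂ) →L[ℂ] ℂ, ‖Φ‖ ≤ 1 ∧
      ∀ h : C(G, ℂ), Φ h = ∫ x, h x * (g : G → ℂ) x ∂m := by
  have hgi : Integrable (fun x => (g : G → ℂ) x) m := L1.integrable_coeFn g
  have hint : ∀ h : C(G, ℂ), Integrable (fun x => h x * (g : G → ℂ) x) m := fun h =>
    hgi.bdd_mul h.continuous.aestronglyMeasurable (Filter.Eventually.of_forall fun x => h.norm_coe_le_norm x)
  let lin : C(G, ℂ) →ₗ[ℂ] ℂ :=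
    { toFun := fun h => ∫ x, h x * (g : G → ℂ) x ∂m
      map_add' := fun h h' => by
        simp only [ContinuousMap.add_apply, add_mul]
        exact integral_add (hint h) (hint h')
      map_smul' := fun c h => by
        simp only [ContinuousMap.smul_apply, smul_eq_mul, RingHom.id_apply, mul_assoc]
        exact integral_const_mul c _ }
  have hb : ∀ h : C(G, ℂ), ‖lin h‖ ≤ 1 * ‖h‖ := by
    intro h
    have := (int_bound g h).trans (mul_le_mul_of_nonneg_left hg1 (norm_nonneg h))
    simpa [lin, mul_comm] using this
  exact ⟨lin.mkContinuous 1 hb, lin.mkContinuous_norm_le zero_le_one hb, fun h => rfl⟩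

end Aux2

section Aux3

variable {G : Type*} [AddCommGroup G] [TopologicalSpace G] [IsTopologicalAddGroup G]
    [CompactSpace G] [MeasurableSpace G] [BorelSpace G]
    {m : Measure G} [m.IsAddHaarMeasure] [IsProbabilityMeasure m]

lemma unif_cont (f : C(G, ℂ)) {ε : ℝ} (hε : 0 < ε) :
    ∃ U : Set G, IsOpen U ∧ (0 : G) ∈ U ∧ ∀ t y : G, t ∈ U → ‖f (t + y) - f y‖ ≤ ε := by
  have hcont : Continuous fun p : G × G => ‖f (p.1 + p.2) - f p.2‖ :=
    ((f.continuous.comp (continuous_fst.add continuous_snd)).sub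
      (f.continuous.comp continuous_snd)).norm
  have hWo : IsOpen {p : G × G | ‖f (p.1 + p.2) - f p.2‖ < ε} :=
    isOpen_lt hcont continuous_const
  have hsub : ({(0 : G)} : Set G) ×ˢ (Set.univ : Set G) ⊆
      {p : G × G | ‖f (p.1 + p.2) - f p.2‖ < ε} := by
    rintro ⟨t, y⟩ ⟨ht, -⟩
    rcases Set.mem_singleton_iff.mp ht with rfl
    simpa using hε
  obtain ⟨u, v, hu, hv, h0u, huniv, huv⟩ :=
    generalized_tube_lemma isCompact_singleton isCompact_univ hWo hsub
  refine ⟨u, hu, ?_, ?_⟩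
  · exact Set.singleton_subset_iff.mp h0u
  · intro t y ht
    have hmem : (t, y) ∈ u ×ˢ v := Set.mk_mem_prod ht (huniv (Set.mem_univ y))
    have := huv hmem
    exact le_of_lt this

lemma exists_kernel {U : Set G} (hUo : IsOpen U) (hU0 : (0 : G) ∈ U) :
    ∃ k : C(G, ℝ), (∀ x, 0 ≤ k x) ∧ (∀ t, k t ≠ 0 → t ∈ U) ∧ ∫ x, k x ∂m = 1 := by
  obtain ⟨k₀, h0, h1, hIcc⟩ := exists_continuous_zero_one_of_isCompact'
    (isCompact_singleton : IsCompact ({(0 : G)} : Set G)) hUo.isClosed_compl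
    (Set.disjoint_singleton_left.mpr (by simpa using hU0))
  have hk₀int : Integrable (fun x => k₀ x) m := contInt k₀.continuous
  have hk₀0 : k₀ 0 = 1 := h1 rfl
  have hpos : 0 < ∫ x, k₀ x ∂m := by
    rw [integral_pos_iff_support_of_nonneg (fun x => (hIcc x).1) hk₀int]
    have hopen : IsOpen {x : G | 0 < k₀ x} := isOpen_lt continuous_const k₀.continuous
    calc (0 : ENNReal) < m {x : G | 0 < k₀ x} :=
          hopen.measure_pos m ⟨0, by simp [hk₀0]⟩
      _ ≤ m (Function.support fun x => k₀ x) :=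
          measure_mono fun x hx => ne_of_gt hx
  set c := ∫ x, k₀ x ∂m with hc
  refine ⟨c⁻¹ • k₀, fun x => ?_, fun t ht => ?_, ?_⟩
  · simp only [ContinuousMap.smul_apply, smul_eq_mul]
    exact mul_nonneg (inv_nonneg.mpr hpos.le) (hIcc x).1
  · by_contra htU
    exact ht (by simp [ContinuousMap.smul_apply, h0 htU])
  · simp only [ContinuousMap.smul_apply, smul_eq_mul]
    rw [integral_const_mul, ← hc, inv_mul_cancel₀ hpos.ne']

end Aux3

section Key

variable {G : Type*} [AddCommGroup G] [TopologicalSpace G] [IsTopologicalAddGroup G]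
    [CompactSpace G] [MeasurableSpace G] [BorelSpace G]
    {m : Measure G} [m.IsAddHaarMeasure] [IsProbabilityMeasure m]

lemma key_dir (Λ : Set C(G, ℂ)) (f : C(G, ℂ)) (Φ : C(G, ℂ) →L[ℂ] ℂ) (hΦ : ‖Φ‖ ≤ 1)
    (hvan : ∀ γ : C(G, ℂ), IsChar γ → γ ∉ Λ → Φ (star γ) = 0) {ε : ℝ} (hε : 0 < ε) :
    ∃ g : Lp ℂ 1 m, ‖g‖ ≤ 1 ∧
      (∀ γ : C(G, ℂ), IsChar γ → γ ∉ Λ → fourCoeff m (g : G → ℂ) γ = 0) ∧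
      ‖Φ f‖ ≤ ‖∫ x, f x * (g : G → ℂ) x ∂m‖ + ε := by
  obtain ⟨U, hUo, hU0, hUf⟩ := unif_cont f hε
  obtain ⟨k, hk0, hkU, hk1⟩ := exists_kernel (m := m) hUo hU0
  -- complex-valued kernel
  set kC : C(G, ℂ) := ⟨fun x => (k x : ℂ), Complex.continuous_ofReal.comp k.continuous⟩
    with hkCdef
  have hkCval : ∀ x, kC x = (k x : ℂ) := fun _ => rfl
  have hkCnorm : ∀ x, ‖kC x‖ = k x := fun x => by
    rw [hkCval, Complex.norm_real, Real.norm_eq_abs, abs_of_nonneg (hk0 x)]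
  -- the translation family
  have hTcont : Continuous fun p : G × G => kC (p.1 - p.2) :=
    kC.continuous.comp (continuous_fst.sub continuous_snd)
  set Tc : C(G, C(G, ℂ)) := (ContinuousMap.mk _ hTcont).curry with hTcdef
  set T : G → C(G, ℂ) := fun x => Tc x with hTdef
  have hTapp : ∀ x y, T x y = kC (x - y) := fun x y => rfl
  have hTsm : AEStronglyMeasurable T m := by
    borelize C(G, ℂ)
    exact (Tc.continuous.stronglyMeasurable_of_support_subset_isCompact
      isCompact_univ (Set.subset_univ _)).aestronglyMeasurable
  have hTnorm : ∀ x, ‖T x‖ ≤ ‖kC‖ := fun x =>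
    (ContinuousMap.norm_le _ (norm_nonneg kC)).2 fun y => by
      rw [hTapp]; exact kC.norm_coe_le_norm _
  -- the convolved function
  set g₀ : G → ℂ := fun x => Φ (T x) with hg₀def
  have hg₀cont : Continuous g₀ := Φ.continuous.comp Tc.continuous
  -- integrability of c • T
  have hinteg : ∀ (c : G → ℂ) (B : ℝ), AEStronglyMeasurable c m → (∀ x, ‖c x‖ ≤ B) →
      Integrable (fun x => c x • T x) m := by
    intro c B hc hB
    refine Integrable.mono' (integrable_const (B * ‖kC‖)) (hc.smul hTsm)
      (Filter.Eventually.of_forall fun x => ?_)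
    rw [norm_smul]
    exact mul_le_mul (hB x) (hTnorm x) (norm_nonneg _) ((norm_nonneg (c x)).trans (hB x))
  -- swapping Φ with the vector integral
  have hswap : ∀ c : G → ℂ, Integrable (fun x => c x • T x) m →
      ∫ x, c x * g₀ x ∂m = Φ (∫ x, c x • T x ∂m) := by
    intro c hc
    rw [← ContinuousLinearMap.integral_comp_comm Φ hc]
    exact integral_congr_ae (Filter.Eventually.of_forall fun x => by
      simp [hg₀def, smul_eq_mul])
  -- evaluation of the vector integral
  have hval : ∀ (c : G → ℂ), Integrable (fun x => c x • T x) m → ∀ y : G,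
      (∫ x, c x • T x ∂m) y = ∫ x, c x * kC (x - y) ∂m := by
    intro c hc y
    rw [ContinuousMap.integral_apply hc y]
    exact integral_congr_ae (Filter.Eventually.of_forall fun x => by
      simp [hTapp, smul_eq_mul])
  -- change of variables
  have hcov : ∀ (c : G → ℂ) (y : G),
      ∫ x, c x * kC (x - y) ∂m = ∫ t, c (t + y) * kC t ∂m := by
    intro c y
    have h := integral_add_right_eq_self (μ := m) (fun x => c x * kC (x - y)) y
    simp only [add_sub_cancel_right] at h
    exact h.symm
  have hky : ∀ y : G, ∫ x, k (x - y) ∂m = 1 := by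
    intro y
    have h := integral_add_right_eq_self (μ := m) (fun x => k (x - y)) y
    simp only [add_sub_cancel_right] at h
    rw [← h]; exact hk1
  -- the sign function
  set σ : G → ℂ := fun x => if g₀ x = 0 then 1 else (‖g₀ x‖ : ℂ) / g₀ x with hσdef
  have hσnorm : ∀ x, ‖σ x‖ ≤ 1 := by
    intro x
    by_cases h : g₀ x = 0
    · simp [hσdef, h]
    · simp only [hσdef, h, if_false]
      rw [norm_div, Complex.norm_real, Real.norm_eq_abs, abs_of_nonneg (norm_nonneg _)]
      exact le_of_eq (div_self (norm_ne_zero_iff.mpr h))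
  have hσmul : ∀ x, σ x * g₀ x = (‖g₀ x‖ : ℂ) := by
    intro x
    by_cases h : g₀ x = 0
    · simp [hσdef, h]
    · simp only [hσdef, h, if_false]
      exact div_mul_cancel₀ _ h
  have hσm : AEStronglyMeasurable σ m := by
    have : Measurable σ := by
      refine Measurable.ite (hg₀cont.measurable (measurableSet_singleton 0))
        measurable_const ?_
      exact (Complex.measurable_ofReal.comp hg₀cont.measurable.norm).div hg₀cont.measurable
    exact this.aestronglyMeasurable
  have hσint : Integrable (fun x => σ x • T x) m := hinteg σ 1 hσm hσnorm
  -- the L¹-norm estimate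
  have hg₀norm : ∫ x, ‖g₀ x‖ ∂m ≤ 1 := by
    have h1 : ∫ x, σ x * g₀ x ∂m = ((∫ x, ‖g₀ x‖ ∂m : ℝ) : ℂ) := by
      exact (integral_congr_ae (Filter.Eventually.of_forall fun x => hσmul x)).trans
        integral_ofReal
    have h2 : ‖∫ x, σ x * g₀ x ∂m‖ = ∫ x, ‖g₀ x‖ ∂m := by
      rw [h1, Complex.norm_real, Real.norm_eq_abs,
        abs_of_nonneg (integral_nonneg fun x => norm_nonneg _)]
    have hb : ‖∫ x, σ x • T x ∂m‖ ≤ 1 := by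
      refine (ContinuousMap.norm_le _ zero_le_one).2 fun y => ?_
      rw [hval σ hσint y]
      have int2 : Integrable (fun x => k (x - y)) m :=
        contInt (k.continuous.comp (continuous_id.sub continuous_const))
      have int1 : Integrable (fun x => σ x * kC (x - y)) m := by
        refine (contInt (kC.continuous.comp
          (continuous_id.sub continuous_const))).bdd_mul hσm (Filter.Eventually.of_forall hσnorm)
      calc ‖∫ x, σ x * kC (x - y) ∂m‖ ≤ ∫ x, ‖σ x * kC (x - y)‖ ∂m :=
            norm_integral_le_integral_norm _
        _ ≤ ∫ x, k (x - y) ∂m := by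
            refine integral_mono int1.norm int2 fun x => ?_
            rw [norm_mul, hkCnorm]
            calc ‖σ x‖ * k (x - y) ≤ 1 * k (x - y) :=
                  mul_le_mul_of_nonneg_right (hσnorm x) (hk0 _)
              _ = k (x - y) := one_mul _
        _ = 1 := hky y
    rw [← h2, hswap σ hσint]
    calc ‖Φ (∫ x, σ x • T x ∂m)‖ ≤ ‖Φ‖ * ‖∫ x, σ x • T x ∂m‖ := Φ.le_opNorm _
      _ ≤ 1 * 1 := mul_le_mul hΦ hb (norm_nonneg _) zero_le_one
      _ = 1 := one_mul 1
  -- Fourier coefficients of g₀ vanish off Λ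
  have hfour : ∀ γ : C(G, ℂ), IsChar γ → γ ∉ Λ →
      ∫ x, g₀ x * (starRingEnd ℂ) (γ x) ∂m = 0 := by
    intro γ hγ hγΛ
    set c : G → ℂ := fun x => (starRingEnd ℂ) (γ x) with hcdef
    have hcc : Continuous c := continuous_star.comp γ.continuous
    have hcb : ∀ x, ‖c x‖ ≤ 1 := fun x => by
      rw [hcdef]; simp only [RCLike.norm_conj]; exact le_of_eq (hγ.2 x)
    have hci : Integrable (fun x => c x • T x) m := hinteg c 1 hcc.aestronglyMeasurable hcb
    have h1 : ∫ x, g₀ x * c x ∂m = Φ (∫ x, c x • T x ∂m) := by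
      rw [← hswap c hci]
      exact integral_congr_ae (Filter.Eventually.of_forall fun x => mul_comm _ _)
    have h2 : (∫ x, c x • T x ∂m) = (∫ t, c t * kC t ∂m) • star γ := by
      ext y
      rw [hval c hci y, hcov c y]
      have hstep : ∀ t, c (t + y) * kC t = c y * (c t * kC t) := by
        intro t
        show (starRingEnd ℂ) (γ (t + y)) * kC t =
          (starRingEnd ℂ) (γ y) * ((starRingEnd ℂ) (γ t) * kC t)
        rw [hγ.1 t y, map_mul]
        ring
      calc ∫ t, c (t + y) * kC t ∂m = ∫ t, c y * (c t * kC t) ∂m :=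
            integral_congr_ae (Filter.Eventually.of_forall hstep)
        _ = c y * ∫ t, c t * kC t ∂m := integral_const_mul _ _
        _ = ((∫ t, c t * kC t ∂m) • star γ) y := by
            simp only [ContinuousMap.smul_apply, smul_eq_mul, ContinuousMap.star_apply]
            rw [hcdef]
            simp only [starRingEnd_apply]
            ring
      done
    rw [show ∫ x, g₀ x * (starRingEnd ℂ) (γ x) ∂m = ∫ x, g₀ x * c x ∂m from rfl, h1, h2,
      _root_.map_smul, hvan γ hγ hγΛ, smul_zero]
  -- closeness of the convolution to f under Φ
  have hf_int : Integrable (fun x => (f : G → ℂ) x • T x) m :=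
    hinteg f ‖f‖ f.continuous.aestronglyMeasurable (fun x => f.norm_coe_le_norm x)
  have hIf : ∫ x, f x * g₀ x ∂m = Φ (∫ x, (f : G → ℂ) x • T x ∂m) := hswap _ hf_int
  have hkCint : ∫ t, kC t ∂m = 1 := by
    have : ∫ t, kC t ∂m = ((∫ t, k t ∂m : ℝ) : ℂ) :=
      (integral_congr_ae (Filter.Eventually.of_forall fun t => hkCval t)).trans integral_ofReal
    rw [this, hk1, Complex.ofReal_one]
  have hclose : ‖(∫ x, (f : G → ℂ) x • T x ∂m) - f‖ ≤ ε := by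
    refine (ContinuousMap.norm_le _ hε.le).2 fun y => ?_
    simp only [ContinuousMap.sub_apply]
    rw [hval _ hf_int y, hcov _ y]
    have intA : Integrable (fun t => (f : G → ℂ) (t + y) * kC t) m :=
      contInt ((f.continuous.comp (continuous_id.add continuous_const)).mul kC.continuous)
    have intB : Integrable (fun t => (f : G → ℂ) y * kC t) m :=
      contInt (continuous_const.mul kC.continuous)
    have hfy : (f : G → ℂ) y = ∫ t, f y * kC t ∂m := by
      rw [integral_const_mul, hkCint, mul_one]
    rw [hfy, ← integral_sub intA intB]
    have intD : Integrable (fun t => ε * k t) m := (contInt k.continuous).const_mul ε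
    calc ‖∫ t, ((f : G → ℂ) (t + y) * kC t - f y * kC t) ∂m‖
        ≤ ∫ t, ‖(f : G → ℂ) (t + y) * kC t - f y * kC t‖ ∂m :=
          norm_integral_le_integral_norm _
      _ ≤ ∫ t, ε * k t ∂m := by
          refine integral_mono (intA.sub intB).norm intD fun t => ?_
          rw [← sub_mul, norm_mul, hkCnorm]
          by_cases h : k t = 0
          · simp [h]
          · exact mul_le_mul_of_nonneg_right (hUf t y (hkU t h)) (hk0 t)
      _ = ε := by rw [integral_const_mul, hk1, mul_one]
  have hfinal : ‖Φ f‖ ≤ ‖∫ x, f x * g₀ x ∂m‖ + ε := by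
    have hdiff : ‖Φ f - ∫ x, f x * g₀ x ∂m‖ ≤ ε := by
      rw [hIf, ← map_sub]
      calc ‖Φ (f - ∫ x, (f : G → ℂ) x • T x ∂m)‖
          ≤ ‖Φ‖ * ‖f - ∫ x, (f : G → ℂ) x • T x ∂m‖ := Φ.le_opNorm _
        _ ≤ 1 * ε := by
            refine mul_le_mul hΦ ?_ (norm_nonneg _) zero_le_one
            rw [norm_sub_rev]; exact hclose
        _ = ε := one_mul ε
    have := norm_sub_norm_le (Φ f) (∫ x, f x * g₀ x ∂m)
    linarith
  -- package the function
  have hg₀i : Integrable g₀ m := contInt hg₀cont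
  have hcoe : (hg₀i.toL1 g₀ : G → ℂ) =ᵐ[m] g₀ := hg₀i.coeFn_toL1
  refine ⟨hg₀i.toL1 g₀, ?_, ?_, ?_⟩
  · rw [L1.norm_eq_integral_norm]
    calc ∫ a, ‖(hg₀i.toL1 g₀ : G → ℂ) a‖ ∂m = ∫ a, ‖g₀ a‖ ∂m :=
          integral_congr_ae (hcoe.mono fun a ha => congrArg norm ha)
      _ ≤ 1 := hg₀norm
  · intro γ hγ hγΛ
    show ∫ x, (hg₀i.toL1 g₀ : G → ℂ) x * (starRingEnd ℂ) (γ x) ∂m = 0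
    calc ∫ x, (hg₀i.toL1 g₀ : G → ℂ) x * (starRingEnd ℂ) (γ x) ∂m
        = ∫ x, g₀ x * (starRingEnd ℂ) (γ x) ∂m :=
          integral_congr_ae (hcoe.mono fun a ha =>
            congrArg (fun z => z * (starRingEnd ℂ) (γ a)) ha)
      _ = 0 := hfour γ hγ hγΛ
  · have heq : ∫ x, f x * (hg₀i.toL1 g₀ : G → ℂ) x ∂m = ∫ x, f x * g₀ x ∂m :=
      integral_congr_ae (hcoe.mono fun a ha => congrArg (fun z => f a * z) ha)
    rw [heq]; exact hfinal

end Key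

/-- For `f ∈ C(G)`, viewed as a functional on `M(G)` (which, by the
Riesz representation theorem, we identify with `C(G)* `, the Fourier–Stieltjes coefficient of
`Φ ∈ C(G)*` at a character `γ` being `Φ (conj γ)`), the norm of the restriction to
`L¹_Λ(G) = {g dm : ĝ(γ) = 0 for γ ∉ Λ}` equals the norm of the restriction to `M_Λ(G)`. -/
theorem norm_restriction_L1Lam_eq_MLam
    {G : Type*} [AddCommGroup G] [TopologicalSpace G] [IsTopologicalAddGroup G]
    [CompactSpace G] [MeasurableSpace G] [BorelSpace G] [Infinite G]
    (m : Measure G) [m.IsAddHaarMeasure] [IsProbabilityMeasure m]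
    (Λ : Set C(G, ℂ)) (f : C(G, ℂ)) :
    sSup {r : ℝ | ∃ g : Lp ℂ 1 m, ‖g‖ ≤ 1 ∧
        (∀ γ : C(G, ℂ), IsChar γ → γ ∉ Λ → fourCoeff m (g : G → ℂ) γ = 0) ∧
        r = ‖∫ x, f x * (g : G → ℂ) x ∂m‖} =
    sSup {r : ℝ | ∃ Φ : C(G, ℂ) →L[ℂ] ℂ, ‖Φ‖ ≤ 1 ∧
        (∀ γ : C(G, ℂ), IsChar γ → γ ∉ Λ → Φ (star γ) = 0) ∧ r = ‖Φ f‖} := by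
  set S1 : Set ℝ := {r : ℝ | ∃ g : Lp ℂ 1 m, ‖g‖ ≤ 1 ∧
        (∀ γ : C(G, ℂ), IsChar γ → γ ∉ Λ → fourCoeff m (g : G → ℂ) γ = 0) ∧
        r = ‖∫ x, f x * (g : G → ℂ) x ∂m‖} with hS1def
  set S2 : Set ℝ := {r : ℝ | ∃ Φ : C(G, ℂ) →L[ℂ] ℂ, ‖Φ‖ ≤ 1 ∧
        (∀ γ : C(G, ℂ), IsChar γ → γ ∉ Λ → Φ (star γ) = 0) ∧ r = ‖Φ f‖} with hS2def
  -- nonemptiness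
  have h0coe : ((0 : Lp ℂ 1 m) : G → ℂ) =ᵐ[m] 0 := Lp.coeFn_zero ℂ 1 m
  have hS1ne : S1.Nonempty := by
    refine ⟨‖∫ x, f x * ((0 : Lp ℂ 1 m) : G → ℂ) x ∂m‖, (0 : Lp ℂ 1 m), by simp, ?_, rfl⟩
    intro γ _ _
    have : ∫ x, ((0 : Lp ℂ 1 m) : G → ℂ) x * (starRingEnd ℂ) (γ x) ∂m
        = ∫ _x, (0 : ℂ) ∂m :=
      integral_congr_ae (h0coe.mono fun a ha => by simp [ha])
    simpa [fourCoeff] using this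
  have hS2ne : S2.Nonempty := ⟨‖(0 : C(G, ℂ) →L[ℂ] ℂ) f‖, 0, by simp, fun γ _ _ => rfl, rfl⟩
  -- upper bounds
  have hS1bdd : ∀ r ∈ S1, r ≤ ‖f‖ := by
    rintro r ⟨g, hg1, -, rfl⟩
    calc ‖∫ x, f x * (g : G → ℂ) x ∂m‖ ≤ ‖f‖ * ‖g‖ := int_bound g f
      _ ≤ ‖f‖ * 1 := mul_le_mul_of_nonneg_left hg1 (norm_nonneg f)
      _ = ‖f‖ := mul_one _
  have hS2bdd : ∀ r ∈ S2, r ≤ ‖f‖ := by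
    rintro r ⟨Φ, hΦ1, -, rfl⟩
    calc ‖Φ f‖ ≤ ‖Φ‖ * ‖f‖ := Φ.le_opNorm f
      _ ≤ 1 * ‖f‖ := mul_le_mul_of_nonneg_right hΦ1 (norm_nonneg f)
      _ = ‖f‖ := one_mul _
  refine le_antisymm ?_ ?_
  · -- sSup S1 ≤ sSup S2 : every element of S1 lies in S2
    refine csSup_le hS1ne fun r hr => ?_
    refine le_csSup ⟨‖f‖, fun s hs => hS2bdd s hs⟩ ?_
    obtain ⟨g, hg1, hgfour, rfl⟩ := hr
    obtain ⟨Φ, hΦ1, hΦval⟩ := easy_dir g hg1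
    refine ⟨Φ, hΦ1, ?_, by rw [hΦval f]⟩
    intro γ hγ hγΛ
    rw [hΦval (star γ)]
    have : ∫ x, (star γ : C(G, ℂ)) x * (g : G → ℂ) x ∂m
        = ∫ x, (g : G → ℂ) x * (starRingEnd ℂ) (γ x) ∂m := by
      refine integral_congr_ae (Filter.Eventually.of_forall fun x => ?_)
      simp only [ContinuousMap.star_apply, starRingEnd_apply]
      exact mul_comm _ _
    rw [this]
    exact hgfour γ hγ hγΛ
  · -- sSup S2 ≤ sSup S1 : approximation by convolution
    refine csSup_le hS2ne fun r hr => ?_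
    obtain ⟨Φ, hΦ1, hΦvan, rfl⟩ := hr
    refine le_of_forall_pos_le_add fun ε hε => ?_
    obtain ⟨g, hg1, hgfour, hgle⟩ := key_dir (m := m) Λ f Φ hΦ1 hΦvan hε
    refine hgle.trans (add_le_add_left ?_ ε)
    exact le_csSup ⟨‖f‖, fun s hs => hS1bdd s hs⟩ ⟨g, hg1, hgfour, rfl⟩
end
end

section
/- Let G be an infinite compact abelian group with dual Γ and Λ ⊆ Γ. For every g ∈ L¹(G), interpreted as a functional on L^∞(G) via h ↦ ∫_G g h dm, the norm of its restriction to C_Λ(G) equals the norm of its restriction to L^∞_Λ(G). -/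
open MeasureTheory
open Filter Set BoundedContinuousFunction

noncomputable section

variable {G : Type*} [AddCommGroup G] [TopologicalSpace G] [IsTopologicalAddGroup G]
    [CompactSpace G] [MeasurableSpace G] [BorelSpace G]

/-- a.e. bound for an `L∞` function of norm at most 1. -/
lemma aux_ae_bound (m : Measure G) (H : Lp ℂ ⊤ m) (hle : ‖H‖ ≤ 1) :
    ∀ᵐ x ∂m, ‖(H : G → ℂ) x‖ ≤ 1 := by
  have h1 : ∀ᵐ x ∂m, (‖(H : G → ℂ) x‖₊ : ENNReal) ≤ eLpNormEssSup (H : G → ℂ) m :=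
    ae_le_eLpNormEssSup
  have h3 : eLpNorm (H : G → ℂ) ⊤ m ≠ ⊤ := Lp.eLpNorm_ne_top H
  have h4 : ‖H‖ = (eLpNorm (H : G → ℂ) ⊤ m).toReal := Lp.norm_def H
  rw [eLpNorm_exponent_top] at h3 h4
  have h2 : eLpNormEssSup (H : G → ℂ) m ≤ 1 := by
    rw [← ENNReal.ofReal_one, ← ENNReal.ofReal_toReal h3]
    exact ENNReal.ofReal_le_ofReal (h4 ▸ hle)
  filter_upwards [h1] with x hx
  have : (‖(H : G → ℂ) x‖₊ : ENNReal) ≤ 1 := hx.trans h2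
  have h5 : ‖(H : G → ℂ) x‖₊ ≤ 1 := by simpa using this
  exact_mod_cast h5


/-- Fubini for integrands of the form `u x * (v t * w (x - t))` with `u` integrable,
`v` bounded strongly measurable, `w` continuous. -/
lemma fubini_aux (m : Measure G) [IsProbabilityMeasure m]
    (u : G → ℂ) (hu : Integrable u m)
    (v : G → ℂ) (hv : StronglyMeasurable v) (hvbd : ∀ t, ‖v t‖ ≤ 1)
    (w : G → ℂ) (hw : Continuous w) :
    ∫ x, ∫ t, u x * (v t * w (x - t)) ∂m ∂m
      = ∫ t, ∫ x, u x * (v t * w (x - t)) ∂m ∂m := by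
  apply integral_integral_swap
  have mpFst : MeasurePreserving (Prod.fst : G × G → G) (m.prod m) m :=
    ⟨measurable_fst, by rw [Measure.map_fst_prod]; simp⟩
  have hwSM : StronglyMeasurable (Function.uncurry fun x t : G => w (x - t)) :=
    (HasCompactSupport.of_compactSpace _).stronglyMeasurable_of_prod
      (show Continuous fun p : G × G => w (p.1 - p.2) from
        hw.comp (continuous_fst.sub continuous_snd))
  obtain ⟨Cw, hCw⟩ : ∃ Cw : ℝ, ∀ z, ‖w z‖ ≤ Cw := by
    obtain ⟨Cw, hCw⟩ := (isCompact_range (hw.norm)).bddAbove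
    exact ⟨Cw, fun z => hCw (Set.mem_range_self z)⟩
  have hmeas : AEStronglyMeasurable
      (Function.uncurry fun x t : G => u x * (v t * w (x - t))) (m.prod m) := by
    have h1 : AEStronglyMeasurable (fun p : G × G => u p.1) (m.prod m) :=
      hu.aestronglyMeasurable.comp_quasiMeasurePreserving
        mpFst.quasiMeasurePreserving
    have h2 : StronglyMeasurable (fun p : G × G => v p.2) :=
      hv.comp_measurable measurable_snd
    exact h1.mul (h2.aestronglyMeasurable.mul hwSM.aestronglyMeasurable)
  refine Integrable.mono' (g := fun p : G × G => Cw * ‖u p.1‖) ?_ hmeas (ae_of_all _ fun p => ?_)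
  · have : Integrable ((fun x : G => ‖u x‖) ∘ (Prod.fst : G × G → G)) (m.prod m) :=
      (mpFst.integrable_comp hu.norm.aestronglyMeasurable).mpr hu.norm
    exact this.const_mul Cw
  · have h3 : ‖u p.1 * (v p.2 * w (p.1 - p.2))‖
        = ‖u p.1‖ * (‖v p.2‖ * ‖w (p.1 - p.2)‖) := by
      simp [norm_mul]
    show ‖u p.1 * (v p.2 * w (p.1 - p.2))‖ ≤ Cw * ‖u p.1‖
    rw [h3]
    have h4 : ‖v p.2‖ * ‖w (p.1 - p.2)‖ ≤ 1 * Cw :=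
      mul_le_mul (hvbd p.2) (hCw _) (norm_nonneg _) zero_le_one
    calc ‖u p.1‖ * (‖v p.2‖ * ‖w (p.1 - p.2)‖) ≤ ‖u p.1‖ * (1 * Cw) :=
          mul_le_mul_of_nonneg_left h4 (norm_nonneg _)
      _ = Cw * ‖u p.1‖ := by ring

/-- Core approximation: any element of the `L^∞_Λ` unit ball pairs with `g` within `ε`
of some element of the `C_Λ` unit ball. -/
theorem approx_key (m : Measure G) [m.IsAddHaarMeasure] [IsProbabilityMeasure m]
    (Λ : Set C(G, ℂ)) (g : Lp ℂ 1 m) (H : Lp ℂ ⊤ m) (hH : ‖H‖ ≤ 1)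
    (hHΛ : ∀ γ : C(G, ℂ), IsChar γ → γ ∉ Λ → fourCoeff m (H : G → ℂ) γ = 0)
    {ε : ℝ} (hε : 0 < ε) :
    ∃ h : C(G, ℂ), ‖h‖ ≤ 1 ∧
      (∀ γ : C(G, ℂ), IsChar γ → γ ∉ Λ → fourCoeff m (h : G → ℂ) γ = 0) ∧
      ‖(∫ x, (g : G → ℂ) x * (H : G → ℂ) x ∂m) - ∫ x, (g : G → ℂ) x * h x ∂m‖ ≤ ε := by
  set gr : G → ℂ := (g : G → ℂ) with hgr
  set Hr : G → ℂ := (H : G → ℂ) with hHr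
  have grInt : Integrable gr m := L1.integrable_coeFn g
  have HrSM : StronglyMeasurable Hr := Lp.stronglyMeasurable H
  have Hae : ∀ᵐ x ∂m, ‖Hr x‖ ≤ 1 := aux_ae_bound m H hH
  -- trimmed everywhere-bounded representative
  set A : Set G := {t | ‖Hr t‖ ≤ 1} with hA
  have hAmeas : MeasurableSet A := measurableSet_le HrSM.norm.measurable measurable_const
  set H' : G → ℂ := A.indicator Hr with hH'
  have H'SM : StronglyMeasurable H' := HrSM.indicator hAmeas
  have H'bd : ∀ t, ‖H' t‖ ≤ 1 := by
    intro t
    by_cases ht : t ∈ A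
    · rw [hH', Set.indicator_of_mem ht]; exact ht
    · simp [hH', Set.indicator_of_notMem ht]
  have H'ae : H' =ᵐ[m] Hr := by
    filter_upwards [Hae] with t ht
    simp [hH', Set.indicator_of_mem (by exact ht : t ∈ A)]
  set δ : ℝ := ε / 3 with hδ
  have hδpos : 0 < δ := by positivity
  -- continuous approximation of g
  obtain ⟨g₀, hg₀, g₀Int⟩ := grInt.exists_boundedContinuous_integral_sub_le hδpos
  -- translation control for g₀
  obtain ⟨V, hVopen, hV0, hVsmall⟩ :
      ∃ V : Set G, IsOpen V ∧ (0 : G) ∈ V ∧ ∀ y ∈ V, ∀ t, ‖g₀ (t + y) - g₀ t‖ ≤ δ := by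
    set cmap : C(G, C(G, ℂ)) := ContinuousMap.curry
      ⟨fun p : G × G => g₀ (p.2 + p.1),
        g₀.continuous.comp (continuous_snd.add continuous_fst)⟩ with hcmap
    have hev : ∀ᶠ y in nhds (0 : G), dist (cmap y) (cmap 0) < δ :=
      Metric.tendsto_nhds.mp (cmap.continuous.tendsto 0) δ hδpos
    obtain ⟨V, hVsub, hVopen, hV0⟩ := mem_nhds_iff.mp hev
    refine ⟨V, hVopen, hV0, fun y hy t => ?_⟩
    have h1 : dist (cmap y t) (cmap 0 t) ≤ dist (cmap y) (cmap 0) :=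
      ContinuousMap.dist_apply_le_dist t
    have h2 : cmap y t = g₀ (t + y) := rfl
    have h3 : cmap 0 t = g₀ t := by
      show g₀ (t + 0) = g₀ t
      rw [add_zero]
    rw [h2, h3] at h1
    calc ‖g₀ (t + y) - g₀ t‖ = dist (g₀ (t + y)) (g₀ t) := (dist_eq_norm _ _).symm
      _ ≤ dist (cmap y) (cmap 0) := h1
      _ ≤ δ := (hVsub hy).le
  -- Urysohn bump
  obtain ⟨φ₀, hφ₀0, hφ₀icc, hφ₀V⟩ :
      ∃ φ₀ : C(G, ℝ), φ₀ 0 = 1 ∧ (∀ x, 0 ≤ φ₀ x ∧ φ₀ x ≤ 1) ∧ ∀ x ∉ V, φ₀ x = 0 := by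
    obtain ⟨f, hf1, hf0, _, hicc⟩ := exists_continuous_one_zero_of_isCompact
      (isCompact_singleton (x := (0 : G))) hVopen.isClosed_compl
      (disjoint_compl_right_iff_subset.mpr (by simpa using hV0))
    exact ⟨f, hf1 rfl, fun x => ⟨(hicc x).1, (hicc x).2⟩, fun x hx => hf0 hx⟩
  have φ₀Int : Integrable (φ₀ : G → ℝ) m := by
    refine ⟨φ₀.continuous.aestronglyMeasurable, ?_⟩
    exact HasFiniteIntegral.of_bounded (C := 1) (Eventually.of_forall fun x => by
      simpa [Real.norm_eq_abs, abs_of_nonneg (hφ₀icc x).1] using (hφ₀icc x).2)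
  set A₀ : ℝ := ∫ x, φ₀ x ∂m with hA₀
  have hA₀pos : 0 < A₀ := by
    rw [hA₀]
    refine (integral_pos_iff_support_of_nonneg (fun x => (hφ₀icc x).1) φ₀Int).2 ?_
    have hopen : IsOpen (Function.support (φ₀ : G → ℝ)) := by
      have : Function.support (φ₀ : G → ℝ) = (φ₀ : G → ℝ) ⁻¹' ({0}ᶜ) := by
        ext x; simp [Function.mem_support]
      rw [this]
      exact (isOpen_compl_singleton).preimage φ₀.continuous
    refine hopen.measure_pos m ⟨0, ?_⟩
    simp [Function.mem_support, hφ₀0]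
  set φ : G → ℝ := fun y => φ₀ y / A₀ with hφ
  have φnonneg : ∀ y, 0 ≤ φ y := fun y => div_nonneg (hφ₀icc y).1 hA₀pos.le
  have φbd : ∀ y, φ y ≤ 1 / A₀ := by
    intro y
    rw [hφ, div_le_div_iff₀ hA₀pos hA₀pos]
    nlinarith [(hφ₀icc y).2, hA₀pos]
  have φInt : Integrable φ m := φ₀Int.div_const A₀
  have φint1 : ∫ y, φ y ∂m = 1 := by
    rw [hφ]; simp only [integral_div]; exact div_self hA₀pos.ne'
  have φV : ∀ y ∉ V, φ y = 0 := fun y hy => by simp [hφ, hφ₀V y hy]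
  have φcont : Continuous φ := φ₀.continuous.div_const A₀
  -- complexified bump
  set φℂ : G → ℂ := fun y => (φ y : ℂ) with hφℂ
  have φℂcont : Continuous φℂ := Complex.continuous_ofReal.comp φcont
  have φℂnorm : ∀ y, ‖φℂ y‖ = φ y := fun y => by
    rw [hφℂ]; simp only [Complex.norm_real]; exact Real.norm_of_nonneg (φnonneg y)
  have φℂint1 : ∫ y, φℂ y ∂m = 1 := by
    rw [hφℂ]
    have : ∫ y, ((φ y : ℂ)) ∂m = ((∫ y, φ y ∂m : ℝ) : ℂ) := integral_ofReal
    rw [this, φint1]; norm_num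
  -- integrability helpers
  have contInt : ∀ (w : G → ℂ), Continuous w → Integrable w m := fun w hw =>
    hw.integrable_of_hasCompactSupport (HasCompactSupport.of_compactSpace _)
  have H'mulInt : ∀ (w : G → ℂ), Continuous w → Integrable (fun t => H' t * w t) m := by
    intro w hw
    exact Integrable.bdd_mul (c := 1) (contInt w hw) H'SM.aestronglyMeasurable
      (Eventually.of_forall H'bd)
  -- pairing functionals with continuous test families are continuous
  have contPair : ∀ (u : G → ℂ), Integrable u m →
      Continuous fun t => ∫ x, u x * φℂ (x - t) ∂m := by
    intro u hu
    set M : NNReal := (∫ x, ‖u x‖ ∂m).toNNReal with hM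
    have uInt : ∀ ψ : C(G, ℂ), Integrable (fun x => u x * ψ x) m := by
      intro ψ
      have h1 := Integrable.bdd_mul (c := ‖ψ‖) hu ψ.continuous.aestronglyMeasurable
        (Eventually.of_forall fun x => ψ.norm_coe_le_norm x)
      simpa [mul_comm] using h1
    have lip : LipschitzWith M (fun ψ : C(G, ℂ) => ∫ x, u x * ψ x ∂m) := by
      refine LipschitzWith.of_dist_le_mul fun ψ ψ' => ?_
      rw [dist_eq_norm, ← integral_sub (uInt ψ) (uInt ψ')]
      have step : ∀ x, u x * ψ x - u x * ψ' x = u x * (ψ x - ψ' x) := fun x => by ring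
      simp_rw [step]
      calc ‖∫ x, u x * (ψ x - ψ' x) ∂m‖ ≤ ∫ x, ‖u x * (ψ x - ψ' x)‖ ∂m :=
            norm_integral_le_integral_norm _
        _ ≤ ∫ x, ‖u x‖ * dist ψ ψ' ∂m := by
            refine integral_mono_of_nonneg (Eventually.of_forall fun x => norm_nonneg _)
              (hu.norm.mul_const _) (Eventually.of_forall fun x => ?_)
            show ‖u x * (ψ x - ψ' x)‖ ≤ ‖u x‖ * dist ψ ψ'
            rw [norm_mul]
            refine mul_le_mul_of_nonneg_left ?_ (norm_nonneg _)
            rw [← dist_eq_norm]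
            exact ContinuousMap.dist_apply_le_dist x
        _ = (∫ x, ‖u x‖ ∂m) * dist ψ ψ' := integral_mul_const _ _
        _ ≤ (M : ℝ) * dist ψ ψ' := by
            refine mul_le_mul_of_nonneg_right ?_ dist_nonneg
            rw [hM]
            exact (Real.le_coe_toNNReal _)
    have Φ'cont : Continuous fun t : G => ((ContinuousMap.curry
        ⟨fun p : G × G => φℂ (p.2 - p.1),
          φℂcont.comp (continuous_snd.sub continuous_fst)⟩ : C(G, C(G, ℂ))) t) :=
      (ContinuousMap.curry _).continuous
    exact lip.continuous.comp Φ'cont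
  -- the continuous approximant
  set h'fun : G → ℂ := fun x => ∫ t, H' t * φℂ (x - t) ∂m with hh'fun
  have h'cont : Continuous h'fun := by
    set Mψ : NNReal := 1 with hMψ
    have lip : LipschitzWith 1 (fun ψ : C(G, ℂ) => ∫ t, H' t * ψ t ∂m) := by
      refine LipschitzWith.of_dist_le_mul fun ψ ψ' => ?_
      rw [NNReal.coe_one, one_mul, dist_eq_norm,
        ← integral_sub (H'mulInt ψ ψ.continuous) (H'mulInt ψ' ψ'.continuous)]
      have step : ∀ t, H' t * ψ t - H' t * ψ' t = H' t * (ψ t - ψ' t) := fun t => by ring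
      simp_rw [step]
      calc ‖∫ t, H' t * (ψ t - ψ' t) ∂m‖ ≤ ∫ t, ‖H' t * (ψ t - ψ' t)‖ ∂m :=
            norm_integral_le_integral_norm _
        _ ≤ ∫ _t, dist ψ ψ' ∂m := by
            refine integral_mono_of_nonneg (Eventually.of_forall fun t => norm_nonneg _)
              (integrable_const _) (Eventually.of_forall fun t => ?_)
            show ‖H' t * (ψ t - ψ' t)‖ ≤ dist ψ ψ'
            rw [norm_mul]
            calc ‖H' t‖ * ‖ψ t - ψ' t‖ ≤ 1 * dist ψ ψ' := by
                  refine mul_le_mul (H'bd t) ?_ (norm_nonneg _) zero_le_one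
                  rw [← dist_eq_norm]
                  exact ContinuousMap.dist_apply_le_dist t
              _ = dist ψ ψ' := one_mul _
        _ = dist ψ ψ' := by simp
    have Φcont : Continuous fun x : G => ((ContinuousMap.curry
        ⟨fun p : G × G => φℂ (p.1 - p.2),
          φℂcont.comp (continuous_fst.sub continuous_snd)⟩ : C(G, C(G, ℂ))) x) :=
      (ContinuousMap.curry _).continuous
    exact lip.continuous.comp Φcont
  set h' : C(G, ℂ) := ⟨h'fun, h'cont⟩ with hh'
  -- norm bound for h'
  have h'bd : ∀ x, ‖h'fun x‖ ≤ 1 := by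
    intro x
    calc ‖h'fun x‖ ≤ ∫ t, ‖H' t * φℂ (x - t)‖ ∂m := norm_integral_le_integral_norm _
      _ ≤ ∫ t, φ (x - t) ∂m := by
          refine integral_mono_of_nonneg (Eventually.of_forall fun t => norm_nonneg _)
            ?_ (Eventually.of_forall fun t => ?_)
          · exact ((φcont.comp (continuous_const.sub continuous_id)).integrable_of_hasCompactSupport
              (HasCompactSupport.of_compactSpace _))
          · show ‖H' t * φℂ (x - t)‖ ≤ φ (x - t)
            calc ‖H' t * φℂ (x - t)‖ = ‖H' t‖ * φ (x - t) := by rw [norm_mul, φℂnorm]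
              _ ≤ 1 * φ (x - t) := mul_le_mul_of_nonneg_right (H'bd t) (φnonneg _)
              _ = φ (x - t) := one_mul _
      _ = ∫ t, φ t ∂m := integral_sub_left_eq_self φ m x
      _ = 1 := φint1
  have h'norm : ‖h'‖ ≤ 1 := (ContinuousMap.norm_le _ zero_le_one).mpr h'bd
  -- pairing identity
  have pairing : ∀ (u : G → ℂ), Integrable u m →
      ∫ x, u x * h'fun x ∂m = ∫ t, H' t * (∫ x, u x * φℂ (x - t) ∂m) ∂m := by
    intro u hu
    have step1 : ∀ x, u x * h'fun x = ∫ t, u x * (H' t * φℂ (x - t)) ∂m := fun x => by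
      rw [hh'fun, integral_const_mul]
    calc ∫ x, u x * h'fun x ∂m = ∫ x, ∫ t, u x * (H' t * φℂ (x - t)) ∂m ∂m := by
          exact integral_congr_ae (ae_of_all _ step1)
      _ = ∫ t, ∫ x, u x * (H' t * φℂ (x - t)) ∂m ∂m :=
          fubini_aux m u hu H' H'SM H'bd φℂ φℂcont
      _ = ∫ t, H' t * (∫ x, u x * φℂ (x - t) ∂m) ∂m := by
          refine integral_congr_ae (ae_of_all _ fun t => ?_)
          show ∫ x, u x * (H' t * φℂ (x - t)) ∂m = H' t * ∫ x, u x * φℂ (x - t) ∂m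
          rw [← integral_const_mul]
          exact integral_congr_ae (ae_of_all _ fun x => by ring)
  -- spectral property of h'
  have h'spec : ∀ γ : C(G, ℂ), IsChar γ → γ ∉ Λ → fourCoeff m (h' : G → ℂ) γ = 0 := by
    intro γ hγ hγΛ
    set cγ : G → ℂ := fun x => (starRingEnd ℂ) (γ x) with hcγ
    have cγcont : Continuous cγ := continuous_star.comp γ.continuous
    have cγInt : Integrable cγ m := contInt cγ cγcont
    have key : fourCoeff m (h' : G → ℂ) γ
        = ∫ t, H' t * (∫ x, cγ x * φℂ (x - t) ∂m) ∂m := by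
      have : fourCoeff m (h' : G → ℂ) γ = ∫ x, cγ x * h'fun x ∂m := by
        unfold fourCoeff
        refine integral_congr_ae (ae_of_all _ fun x => ?_)
        show h'fun x * (starRingEnd ℂ) (γ x) = cγ x * h'fun x
        rw [hcγ]; ring
      rw [this]
      exact pairing cγ cγInt
    have inner : ∀ t, ∫ x, cγ x * φℂ (x - t) ∂m = cγ t * ∫ y, cγ y * φℂ y ∂m := by
      intro t
      have sub1 : ∫ x, cγ x * φℂ (x - t) ∂m = ∫ x, cγ (t + x) * φℂ (t + x - t) ∂m :=
        (integral_add_left_eq_self (fun x => cγ x * φℂ (x - t)) t).symm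
      rw [sub1]
      have step : ∀ x, cγ (t + x) * φℂ (t + x - t) = cγ t * (cγ x * φℂ x) := by
        intro x
        have h5 : t + x - t = x := by abel
        rw [h5, hcγ]
        show (starRingEnd ℂ) (γ (t + x)) * φℂ x
          = (starRingEnd ℂ) (γ t) * ((starRingEnd ℂ) (γ x) * φℂ x)
        rw [hγ.1 t x, map_mul]; ring
      simp_rw [step]
      rw [integral_const_mul]
    have final : fourCoeff m (h' : G → ℂ) γ
        = (∫ y, cγ y * φℂ y ∂m) * ∫ t, H' t * cγ t ∂m := by
      rw [key]
      have : ∀ t, H' t * (∫ x, cγ x * φℂ (x - t) ∂m)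
          = (∫ y, cγ y * φℂ y ∂m) * (H' t * cγ t) := by
        intro t; rw [inner t]; ring
      simp_rw [this]
      rw [integral_const_mul]
    rw [final]
    have hzero : ∫ t, H' t * cγ t ∂m = 0 := by
      have congr1 : ∫ t, H' t * cγ t ∂m = ∫ t, Hr t * cγ t ∂m := by
        refine integral_congr_ae ?_
        filter_upwards [H'ae] with t ht
        rw [ht]
      rw [congr1]
      have := hHΛ γ hγ hγΛ
      unfold fourCoeff at this
      exact this
    rw [hzero, mul_zero]
  -- pointwise closeness of the smoothed g₀ to g₀
  have k₀close : ∀ t, ‖(∫ x, (g₀ : G → ℂ) x * φℂ (x - t) ∂m) - g₀ t‖ ≤ δ := by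
    intro t
    have e1 : ∫ x, (g₀ : G → ℂ) x * φℂ (x - t) ∂m = ∫ y, (g₀ : G → ℂ) (t + y) * φℂ y ∂m := by
      rw [← integral_add_left_eq_self (fun x => (g₀ : G → ℂ) x * φℂ (x - t)) t]
      refine integral_congr_ae (ae_of_all _ fun y => ?_)
      show (g₀ : G → ℂ) (t + y) * φℂ (t + y - t) = (g₀ : G → ℂ) (t + y) * φℂ y
      have h5 : t + y - t = y := by abel
      rw [h5]
    have e2 : ((g₀ : G → ℂ) t : ℂ) = ∫ y, (g₀ : G → ℂ) t * φℂ y ∂m := by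
      rw [integral_const_mul, φℂint1, mul_one]
    have intgr1 : Integrable (fun y => (g₀ : G → ℂ) (t + y) * φℂ y) m :=
      contInt _ ((g₀.continuous.comp (continuous_const.add continuous_id)).mul φℂcont)
    have intgr2 : Integrable (fun y => ((g₀ : G → ℂ) t) * φℂ y) m :=
      (contInt φℂ φℂcont).const_mul _
    calc ‖(∫ x, (g₀ : G → ℂ) x * φℂ (x - t) ∂m) - g₀ t‖
        = ‖∫ y, ((g₀ : G → ℂ) (t + y) * φℂ y - (g₀ : G → ℂ) t * φℂ y) ∂m‖ := by
          rw [e1, integral_sub intgr1 intgr2, ← e2]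
      _ ≤ ∫ y, ‖(g₀ : G → ℂ) (t + y) * φℂ y - (g₀ : G → ℂ) t * φℂ y‖ ∂m :=
          norm_integral_le_integral_norm _
      _ ≤ ∫ y, δ * φ y ∂m := by
          refine integral_mono_of_nonneg (Eventually.of_forall fun y => norm_nonneg _)
            (φInt.const_mul δ) (Eventually.of_forall fun y => ?_)
          show ‖(g₀ : G → ℂ) (t + y) * φℂ y - (g₀ : G → ℂ) t * φℂ y‖ ≤ δ * φ y
          have e4 : (g₀ : G → ℂ) (t + y) * φℂ y - (g₀ : G → ℂ) t * φℂ y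
              = ((g₀ : G → ℂ) (t + y) - (g₀ : G → ℂ) t) * φℂ y := by ring
          rw [e4, norm_mul, φℂnorm]
          by_cases hy : y ∈ V
          · exact mul_le_mul_of_nonneg_right (hVsmall y hy t) (φnonneg y)
          · rw [φV y hy]; simp
      _ = δ * ∫ y, φ y ∂m := integral_const_mul _ _
      _ = δ := by rw [φint1, mul_one]
  -- replacing g by its continuous approximation in pairings
  have ends : ∀ (b : G → ℂ), AEStronglyMeasurable b m → (∀ᵐ x ∂m, ‖b x‖ ≤ 1) →
      ‖(∫ x, gr x * b x ∂m) - ∫ x, (g₀ : G → ℂ) x * b x ∂m‖ ≤ δ := by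
    intro b hbm hbd
    have i1 : Integrable (fun x => gr x * b x) m := by
      have := Integrable.bdd_mul (c := 1) grInt hbm hbd
      simpa [mul_comm] using this
    have i2 : Integrable (fun x => (g₀ : G → ℂ) x * b x) m := by
      have := Integrable.bdd_mul (c := 1) g₀Int hbm hbd
      simpa [mul_comm] using this
    rw [← integral_sub i1 i2]
    calc ‖∫ x, (gr x * b x - (g₀ : G → ℂ) x * b x) ∂m‖
        ≤ ∫ x, ‖gr x * b x - (g₀ : G → ℂ) x * b x‖ ∂m := norm_integral_le_integral_norm _
      _ ≤ ∫ x, ‖gr x - (g₀ : G → ℂ) x‖ ∂m := by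
          refine integral_mono_of_nonneg (Eventually.of_forall fun x => norm_nonneg _)
            (grInt.sub g₀Int).norm ?_
          filter_upwards [hbd] with x hx
          show ‖gr x * b x - (g₀ : G → ℂ) x * b x‖ ≤ ‖gr x - (g₀ : G → ℂ) x‖
          have e5 : gr x * b x - (g₀ : G → ℂ) x * b x = (gr x - (g₀ : G → ℂ) x) * b x := by
            ring
          rw [e5, norm_mul]
          calc ‖gr x - (g₀ : G → ℂ) x‖ * ‖b x‖ ≤ ‖gr x - (g₀ : G → ℂ) x‖ * 1 :=
                mul_le_mul_of_nonneg_left hx (norm_nonneg _)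
            _ = ‖gr x - (g₀ : G → ℂ) x‖ := mul_one _
      _ ≤ δ := hg₀
  -- middle estimate
  have mid : ‖(∫ x, (g₀ : G → ℂ) x * h'fun x ∂m) - ∫ x, (g₀ : G → ℂ) x * H' x ∂m‖ ≤ δ := by
    have p1 := pairing (g₀ : G → ℂ) g₀Int
    have e3 : ∫ x, (g₀ : G → ℂ) x * H' x ∂m = ∫ t, H' t * (g₀ : G → ℂ) t ∂m :=
      integral_congr_ae (ae_of_all _ fun x => by ring)
    set k₀ : G → ℂ := fun t => ∫ x, (g₀ : G → ℂ) x * φℂ (x - t) ∂m with hk₀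
    have k₀cont : Continuous k₀ := contPair (g₀ : G → ℂ) g₀Int
    have iH'k₀ : Integrable (fun t => H' t * k₀ t) m := H'mulInt k₀ k₀cont
    have iH'g₀ : Integrable (fun t => H' t * (g₀ : G → ℂ) t) m := H'mulInt _ g₀.continuous
    rw [p1, e3, ← integral_sub iH'k₀ iH'g₀]
    calc ‖∫ t, (H' t * k₀ t - H' t * (g₀ : G → ℂ) t) ∂m‖
        ≤ ∫ t, ‖H' t * k₀ t - H' t * (g₀ : G → ℂ) t‖ ∂m := norm_integral_le_integral_norm _
      _ ≤ ∫ _t, δ ∂m := by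
          refine integral_mono_of_nonneg (Eventually.of_forall fun t => norm_nonneg _)
            (integrable_const _) (Eventually.of_forall fun t => ?_)
          show ‖H' t * k₀ t - H' t * (g₀ : G → ℂ) t‖ ≤ δ
          have e6 : H' t * k₀ t - H' t * (g₀ : G → ℂ) t = H' t * (k₀ t - (g₀ : G → ℂ) t) := by
            ring
          rw [e6, norm_mul]
          calc ‖H' t‖ * ‖k₀ t - (g₀ : G → ℂ) t‖ ≤ 1 * δ :=
                mul_le_mul (H'bd t) (k₀close t) (norm_nonneg _) zero_le_one
            _ = δ := one_mul _
      _ = δ := by simp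
  -- conclusion
  have congrH : ∫ x, gr x * Hr x ∂m = ∫ x, gr x * H' x ∂m := by
    refine integral_congr_ae ?_
    filter_upwards [H'ae] with x hx
    rw [hx]
  refine ⟨h', h'norm, h'spec, ?_⟩
  have hcoe : ∀ x, (h' : G → ℂ) x = h'fun x := fun x => rfl
  have target : ‖(∫ x, gr x * Hr x ∂m) - ∫ x, gr x * h'fun x ∂m‖ ≤ ε := by
    set a : ℂ := ∫ x, gr x * H' x ∂m with ha
    set b : ℂ := ∫ x, (g₀ : G → ℂ) x * H' x ∂m with hb
    set c : ℂ := ∫ x, (g₀ : G → ℂ) x * h'fun x ∂m with hc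
    set d : ℂ := ∫ x, gr x * h'fun x ∂m with hd
    have h1 : ‖a - b‖ ≤ δ := ends H' H'SM.aestronglyMeasurable (Eventually.of_forall H'bd)
    have h2 : ‖b - c‖ ≤ δ := by
      have := mid
      calc ‖b - c‖ = ‖c - b‖ := norm_sub_rev _ _
        _ ≤ δ := this
    have h3 : ‖c - d‖ ≤ δ := by
      have := ends h'fun h'cont.aestronglyMeasurable (Eventually.of_forall h'bd)
      calc ‖c - d‖ = ‖d - c‖ := norm_sub_rev _ _
        _ ≤ δ := this
    calc ‖(∫ x, gr x * Hr x ∂m) - d‖ = ‖a - d‖ := by rw [congrH]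
      _ = ‖(a - b) + ((b - c) + (c - d))‖ := by ring_nf
      _ ≤ ‖a - b‖ + ‖(b - c) + (c - d)‖ := norm_add_le _ _
      _ ≤ ‖a - b‖ + (‖b - c‖ + ‖c - d‖) := by
          exact add_le_add le_rfl (norm_add_le _ _)
      _ ≤ δ + (δ + δ) := by
          exact add_le_add h1 (add_le_add h2 h3)
      _ = ε := by rw [hδ]; ring
  simpa [hcoe] using target

end


/-- For `g ∈ L¹(G)`, viewed as a functional on `L^∞(G)` via
`h ↦ ∫ g h dm`, the norm of its restriction to `C_Λ(G)` equals the norm of its restriction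
to `L^∞_Λ(G)`. -/
theorem norm_restriction_CLam_eq_LinftyLam
    {G : Type*} [AddCommGroup G] [TopologicalSpace G] [IsTopologicalAddGroup G]
    [CompactSpace G] [MeasurableSpace G] [BorelSpace G] [Infinite G]
    (m : Measure G) [m.IsAddHaarMeasure] [IsProbabilityMeasure m]
    (Λ : Set C(G, ℂ)) (g : Lp ℂ 1 m) :
    sSup {r : ℝ | ∃ h : C(G, ℂ), ‖h‖ ≤ 1 ∧
        (∀ γ : C(G, ℂ), IsChar γ → γ ∉ Λ → fourCoeff m (h : G → ℂ) γ = 0) ∧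
        r = ‖∫ x, (g : G → ℂ) x * h x ∂m‖} =
    sSup {r : ℝ | ∃ h : Lp ℂ ⊤ m, ‖h‖ ≤ 1 ∧
        (∀ γ : C(G, ℂ), IsChar γ → γ ∉ Λ → fourCoeff m (h : G → ℂ) γ = 0) ∧
        r = ‖∫ x, (g : G → ℂ) x * (h : G → ℂ) x ∂m‖} := by
  set S₁ := {r : ℝ | ∃ h : C(G, ℂ), ‖h‖ ≤ 1 ∧
        (∀ γ : C(G, ℂ), IsChar γ → γ ∉ Λ → fourCoeff m (h : G → ℂ) γ = 0) ∧
        r = ‖∫ x, (g : G → ℂ) x * h x ∂m‖} with hS₁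
  set S₂ := {r : ℝ | ∃ h : Lp ℂ ⊤ m, ‖h‖ ≤ 1 ∧
        (∀ γ : C(G, ℂ), IsChar γ → γ ∉ Λ → fourCoeff m (h : G → ℂ) γ = 0) ∧
        r = ‖∫ x, (g : G → ℂ) x * (h : G → ℂ) x ∂m‖} with hS₂
  have grInt : Integrable ((g : G → ℂ)) m := L1.integrable_coeFn g
  -- `0` belongs to both sets
  have h0S₁ : (0 : ℝ) ∈ S₁ := by
    refine ⟨0, by simp, fun γ _ _ => ?_, ?_⟩
    · unfold fourCoeff
      simp
    · simp
  have h0S₂ : (0 : ℝ) ∈ S₂ := by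
    refine ⟨0, by simp, fun γ _ _ => ?_, ?_⟩
    · unfold fourCoeff
      rw [show (∫ x, ((0 : Lp ℂ ⊤ m) : G → ℂ) x * (starRingEnd ℂ) (γ x) ∂m) = ∫ (_x : G), (0 : ℂ) ∂m
        from integral_congr_ae (by filter_upwards [Lp.coeFn_zero ℂ ⊤ m] with x hx; rw [hx]; simp)]
      simp
    · rw [show (∫ x, (g : G → ℂ) x * ((0 : Lp ℂ ⊤ m) : G → ℂ) x ∂m) = ∫ (_x : G), (0 : ℂ) ∂m
        from integral_congr_ae (by filter_upwards [Lp.coeFn_zero ℂ ⊤ m] with x hx; rw [hx]; simp)]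
      simp
  -- `S₂` is bounded above
  have bddS₂ : BddAbove S₂ := by
    refine ⟨∫ x, ‖(g : G → ℂ) x‖ ∂m, fun r hr => ?_⟩
    obtain ⟨H, hH1, -, rfl⟩ := hr
    have Hae := aux_ae_bound m H hH1
    calc ‖∫ x, (g : G → ℂ) x * (H : G → ℂ) x ∂m‖
        ≤ ∫ x, ‖(g : G → ℂ) x * (H : G → ℂ) x‖ ∂m := norm_integral_le_integral_norm _
      _ ≤ ∫ x, ‖(g : G → ℂ) x‖ ∂m := by
          refine integral_mono_of_nonneg (Eventually.of_forall fun x => norm_nonneg _)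
            grInt.norm ?_
          filter_upwards [Hae] with x hx
          show ‖(g : G → ℂ) x * (H : G → ℂ) x‖ ≤ ‖(g : G → ℂ) x‖
          rw [norm_mul]
          calc ‖(g : G → ℂ) x‖ * ‖(H : G → ℂ) x‖ ≤ ‖(g : G → ℂ) x‖ * 1 :=
                mul_le_mul_of_nonneg_left hx (norm_nonneg _)
            _ = ‖(g : G → ℂ) x‖ := mul_one _
  -- `S₁ ⊆ S₂`
  have hsub : S₁ ⊆ S₂ := by
    rintro r ⟨h, hh1, hhΛ, rfl⟩
    have hm : MemLp (h : G → ℂ) ⊤ m :=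
      memLp_top_of_bound h.continuous.aestronglyMeasurable ‖h‖
        (Eventually.of_forall h.norm_coe_le_norm)
    have hcoe : (hm.toLp (h : G → ℂ) : G → ℂ) =ᵐ[m] (h : G → ℂ) := hm.coeFn_toLp
    refine ⟨hm.toLp (h : G → ℂ), ?_, ?_, ?_⟩
    · rw [Lp.norm_toLp]
      refine ENNReal.toReal_le_of_le_ofReal zero_le_one ?_
      rw [eLpNorm_exponent_top]
      exact eLpNormEssSup_le_of_ae_bound (C := 1)
        (Eventually.of_forall fun x => (h.norm_coe_le_norm x).trans hh1)
    · intro γ hγ hγΛ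
      have : fourCoeff m ((hm.toLp (h : G → ℂ)) : G → ℂ) γ = fourCoeff m (h : G → ℂ) γ := by
        unfold fourCoeff
        refine integral_congr_ae ?_
        filter_upwards [hcoe] with x hx
        rw [hx]
      rw [this]
      exact hhΛ γ hγ hγΛ
    · congr 1
      refine integral_congr_ae ?_
      filter_upwards [hcoe] with x hx
      rw [hx]
  have bddS₁ : BddAbove S₁ := bddS₂.mono hsub
  refine le_antisymm (csSup_le_csSup bddS₂ ⟨0, h0S₁⟩ hsub) ?_
  refine le_of_forall_pos_le_add fun ε hε => ?_
  refine csSup_le ⟨0, h0S₂⟩ fun r hr => ?_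
  obtain ⟨H, hH1, hHΛ, rfl⟩ := hr
  obtain ⟨h, hh1, hhΛ, hclose⟩ := approx_key m Λ g H hH1 hHΛ hε
  have mem : ‖∫ x, (g : G → ℂ) x * h x ∂m‖ ∈ S₁ := ⟨h, hh1, hhΛ, rfl⟩
  calc ‖∫ x, (g : G → ℂ) x * (H : G → ℂ) x ∂m‖
      = ‖(∫ x, (g : G → ℂ) x * h x ∂m)
          + ((∫ x, (g : G → ℂ) x * (H : G → ℂ) x ∂m) - ∫ x, (g : G → ℂ) x * h x ∂m)‖ := by
        ring_nf
    _ ≤ ‖∫ x, (g : G → ℂ) x * h x ∂m‖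
          + ‖(∫ x, (g : G → ℂ) x * (H : G → ℂ) x ∂m) - ∫ x, (g : G → ℂ) x * h x ∂m‖ :=
        norm_add_le _ _
    _ ≤ sSup S₁ + ε := add_le_add (le_csSup bddS₁ mem) hclose
end

section
/- Let (Ω, Σ, μ) be a non-atomic probability space and X a small subspace of L¹(Ω), i.e., there is no A ∈ Σ of positive measure such that the projection P_A(f) = χ_A·f maps X onto L¹(A). Then for every A ∈ Σ of positive measure and every ε > 0 there exists f ∈ L^∞(Ω) with ‖f‖_∞ = 1, supp f ⊆ A, and sup{|∫_Ω f h dμ| : h ∈ X, ‖h‖₁ ≤ 1} ≤ ε. -/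
open MeasureTheory Filter Topology ComplexConjugate
open scoped ENNReal


/-- A measure is *non-atomic* if every set of positive measure contains a measurable subset of
strictly smaller positive measure. -/
def Nonatomic {Ω : Type*} [MeasurableSpace Ω] (μ : Measure Ω) : Prop :=
  ∀ A : Set Ω, MeasurableSet A → 0 < μ A →
    ∃ B ⊆ A, MeasurableSet B ∧ 0 < μ B ∧ μ B < μ A

/-- `P_A` maps `X` onto `L¹(A)`: every `g ∈ L¹` vanishing a.e. outside `A` agrees a.e. on `A`
with some member of `X`. -/
def MapsOnto {Ω : Type*} [MeasurableSpace Ω] (μ : Measure Ω)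
    (X : Set (Lp ℂ 1 μ)) (A : Set Ω) : Prop :=
  ∀ g : Lp ℂ 1 μ, (∀ᵐ x ∂μ, x ∉ A → (g : Ω → ℂ) x = 0) →
    ∃ h ∈ X, ∀ᵐ x ∂μ, x ∈ A → (h : Ω → ℂ) x = (g : Ω → ℂ) x


section Mask
variable {Ω : Type*} [MeasurableSpace Ω] {μ : Measure Ω}

/-- Multiplication by the indicator of `A`, as a continuous linear map on `L¹`. -/
noncomputable def maskCLM (μ : Measure Ω) (A : Set Ω) (hA : MeasurableSet A) :
    Lp ℂ 1 μ →L[ℂ] Lp ℂ 1 μ :=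
  LinearMap.mkContinuous
    { toFun := fun h => ((Lp.memLp h).indicator hA).toLp (A.indicator h)
      map_add' := by
        intro h g
        apply Lp.ext
        filter_upwards [MemLp.coeFn_toLp (E := ℂ) ((Lp.memLp (h + g)).indicator hA),
          Lp.coeFn_add (((Lp.memLp h).indicator hA).toLp _)
            (((Lp.memLp g).indicator hA).toLp _),
          MemLp.coeFn_toLp (E := ℂ) ((Lp.memLp h).indicator hA),
          MemLp.coeFn_toLp (E := ℂ) ((Lp.memLp g).indicator hA),
          Lp.coeFn_add h g] with x e1 e2 e3 e4 e5
        rw [e1, e2, Pi.add_apply, e3, e4]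
        by_cases hx : x ∈ A
        · rw [Set.indicator_of_mem hx, Set.indicator_of_mem hx, Set.indicator_of_mem hx, e5]
          rfl
        · rw [Set.indicator_of_notMem hx, Set.indicator_of_notMem hx,
            Set.indicator_of_notMem hx]
          simp
      map_smul' := by
        intro c h
        apply Lp.ext
        simp only [RingHom.id_apply]
        filter_upwards [MemLp.coeFn_toLp (E := ℂ) ((Lp.memLp (c • h)).indicator hA),
          Lp.coeFn_smul c (((Lp.memLp h).indicator hA).toLp _),
          MemLp.coeFn_toLp (E := ℂ) ((Lp.memLp h).indicator hA),
          Lp.coeFn_smul c h] with x e1 e2 e3 e4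
        rw [e1, e2, Pi.smul_apply, e3]
        by_cases hx : x ∈ A
        · rw [Set.indicator_of_mem hx, Set.indicator_of_mem hx, e4]
          rfl
        · rw [Set.indicator_of_notMem hx, Set.indicator_of_notMem hx]
          simp }
    1
    (by
      intro h
      simp only [LinearMap.coe_mk, AddHom.coe_mk, one_mul]
      rw [Lp.norm_toLp, Lp.norm_def]
      exact ENNReal.toReal_mono (Lp.eLpNorm_ne_top h) (eLpNorm_indicator_le _))

theorem maskCLM_coeFn {A : Set Ω} (hA : MeasurableSet A) (h : Lp ℂ 1 μ) :
    ⇑(maskCLM μ A hA h) =ᵐ[μ] A.indicator ⇑h :=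
  MemLp.coeFn_toLp (E := ℂ) ((Lp.memLp h).indicator hA)

theorem maskCLM_idem {A : Set Ω} (hA : MeasurableSet A) (h : Lp ℂ 1 μ) :
    maskCLM μ A hA (maskCLM μ A hA h) = maskCLM μ A hA h := by
  apply Lp.ext
  filter_upwards [maskCLM_coeFn hA (maskCLM μ A hA h), maskCLM_coeFn hA h] with x e1 e2
  rw [e1]
  by_cases hx : x ∈ A
  · rw [Set.indicator_of_mem hx]
  · rw [Set.indicator_of_notMem hx, e2, Set.indicator_of_notMem hx]

end Mask



section Pair
variable {Ω : Type*} [MeasurableSpace Ω] {μ : Measure Ω}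

theorem pair_integrable {w : Ω → ℂ} (hw : MemLp w ∞ μ) (h : Lp ℂ 1 μ) :
    Integrable (fun x => w x * h x) μ := by
  have := (L1.integrable_coeFn h).smul_of_top_right hw
  exact (by simpa [Pi.smul_apply', smul_eq_mul] using this : Integrable (w * ⇑h) μ)

theorem pair_norm_le {w : Ω → ℂ} (hw : MemLp w ∞ μ) (h : Lp ℂ 1 μ) :
    ‖∫ x, w x * h x ∂μ‖ ≤ (eLpNorm w ∞ μ).toReal * ‖h‖ := by
  set C := (eLpNorm w ∞ μ).toReal with hCdef
  have hC : ∀ᵐ x ∂μ, ‖w x‖ ≤ C := by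
    have h1 := ae_le_eLpNormEssSup (f := w) (μ := μ)
    have h2 : eLpNormEssSup w μ ≠ ⊤ := by
      rw [← eLpNorm_exponent_top]; exact hw.2.ne
    filter_upwards [h1] with x hx
    calc ‖w x‖ = ((‖w x‖₊ : ℝ≥0∞)).toReal := by simp
      _ ≤ (eLpNormEssSup w μ).toReal := ENNReal.toReal_mono h2 hx
      _ = C := by rw [hCdef, eLpNorm_exponent_top]
  calc ‖∫ x, w x * h x ∂μ‖ ≤ ∫ x, C * ‖(h : Ω → ℂ) x‖ ∂μ := by
        refine norm_integral_le_of_norm_le ((L1.integrable_coeFn h).norm.const_mul C) ?_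
        filter_upwards [hC] with x hx
        rw [norm_mul]
        exact mul_le_mul_of_nonneg_right hx (norm_nonneg _)
    _ = C * ∫ x, ‖(h : Ω → ℂ) x‖ ∂μ := integral_const_mul _ _
    _ = C * ‖h‖ := by rw [L1.norm_eq_integral_norm]

/-- Pairing with an `L^∞` function, as a continuous linear functional on `L¹`. -/
noncomputable def pairCLM {w : Ω → ℂ} (hw : MemLp w ∞ μ) : Lp ℂ 1 μ →L[ℂ] ℂ :=
  LinearMap.mkContinuous
    { toFun := fun h => ∫ x, w x * h x ∂μ
      map_add' := by
        intro h g
        rw [← integral_add (pair_integrable hw h) (pair_integrable hw g)]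
        apply integral_congr_ae
        filter_upwards [Lp.coeFn_add h g] with x hx
        rw [hx, Pi.add_apply, mul_add]
      map_smul' := by
        intro c h
        simp only [RingHom.id_apply]
        rw [← integral_smul]
        apply integral_congr_ae
        filter_upwards [Lp.coeFn_smul c h] with x hx
        rw [hx, Pi.smul_apply, smul_eq_mul]
        rw [smul_eq_mul]; ring }
    ((eLpNorm w ∞ μ).toReal)
    (fun h => pair_norm_le hw h)

theorem pairCLM_apply {w : Ω → ℂ} (hw : MemLp w ∞ μ) (h : Lp ℂ 1 μ) :
    pairCLM hw h = ∫ x, w x * h x ∂μ := rfl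

end Pair



theorem exists_exact {F : Type*} [NormedAddCommGroup F] [NormedSpace ℂ F] [CompleteSpace F]
    (T : F →L[ℂ] F) (hTT : ∀ v, T (T v) = T v) (X : Submodule ℂ F)
    (hX : IsClosed (X : Set F)) (C : ℝ) (hC : 0 ≤ C) (g : F) (hg : T g = g)
    (happrox : ∀ v : F, T v = v → ∀ δ : ℝ, 0 < δ →
      ∃ h, h ∈ X ∧ ‖h‖ ≤ C * ‖v‖ ∧ ‖v - T h‖ < δ) :
    ∃ h ∈ X, T h = g := by
  set M : ℝ := ‖g‖ + 1 with hMdef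
  have hM1 : (0 : ℝ) < M := by positivity
  have hstep : ∀ p : {v : F // T v = v}, ∀ n : ℕ,
      ∃ h, h ∈ X ∧ ‖h‖ ≤ C * ‖p.1‖ ∧ ‖p.1 - T h‖ < M * (1 / 2) ^ (n + 1) :=
    fun p n => happrox p.1 p.2 _ (by positivity)
  choose hf hfX hfnorm hfclose using hstep
  let gseq : ℕ → {v : F // T v = v} := fun n =>
    Nat.rec ⟨g, hg⟩ (fun n p => ⟨p.1 - T (hf p n), by rw [map_sub, hTT, p.2]⟩) n
  have hrec : ∀ n, (gseq (n + 1)).1 = (gseq n).1 - T (hf (gseq n) n) := fun n => rfl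
  have hgnorm : ∀ n, ‖(gseq n).1‖ ≤ M * (1 / 2) ^ n := by
    intro n
    cases n with
    | zero =>
      show ‖g‖ ≤ M * (1 / 2) ^ 0
      rw [pow_zero, mul_one, hMdef]
      linarith
    | succ n => rw [hrec n]; exact (hfclose (gseq n) n).le
  set hs : ℕ → F := fun n => hf (gseq n) n with hsdef
  have hhnorm : ∀ n, ‖hs n‖ ≤ C * M * (1 / 2) ^ n := by
    intro n
    refine le_trans (hfnorm (gseq n) n) ?_
    rw [mul_assoc]
    exact mul_le_mul_of_nonneg_left (hgnorm n) hC
  have hsum : Summable hs := by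
    refine Summable.of_norm_bounded ?_ hhnorm
    exact (summable_geometric_of_lt_one (by norm_num) (by norm_num)).mul_left (C * M)
  set s := ∑' n, hs n with hsdef2
  have hsX : s ∈ X := by
    refine hX.mem_of_tendsto hsum.hasSum.tendsto_sum_nat
      (Filter.Eventually.of_forall fun n => ?_)
    exact Submodule.sum_mem X fun i _ => hfX (gseq i) i
  refine ⟨s, hsX, ?_⟩
  have h1 : HasSum (fun n => T (hs n)) (T s) := hsum.hasSum.mapL T
  have h3 : ∀ n, ∑ i ∈ Finset.range n, T (hs i) = g - (gseq n).1 := by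
    intro n
    induction n with
    | zero => simp [gseq]
    | succ n ih => rw [Finset.sum_range_succ, ih, hrec n]; abel
  have hgz : Tendsto (fun n => (gseq n).1) atTop (𝓝 0) := by
    refine squeeze_zero_norm hgnorm ?_
    simpa using (tendsto_pow_atTop_nhds_zero_of_lt_one (by norm_num : (0:ℝ) ≤ 1/2)
      (by norm_num)).const_mul M
  have h4 : Tendsto (fun n => ∑ i ∈ Finset.range n, T (hs i)) atTop (𝓝 g) := by
    simp only [h3]
    simpa using tendsto_const_nhds.sub hgz
  exact tendsto_nhds_unique h1.tendsto_sum_nat h4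



section Rep
variable {Ω : Type*} [MeasurableSpace Ω]

set_option maxHeartbeats 1000000 in
/-- Every continuous linear functional on `L¹(μ)`, `μ` a probability measure, is represented
by an essentially bounded function. -/
theorem exists_rep (μ : Measure Ω) [IsProbabilityMeasure μ] (φ : Lp ℂ 1 μ →L[ℂ] ℂ) :
    ∃ w : Ω → ℂ, MemLp w ⊤ μ ∧ ∀ h : Lp ℂ 1 μ, φ h = ∫ x, w x * h x ∂μ := by
  classical
  -- the inclusion L² → L¹
  have hincl : ∀ u : Lp ℂ 2 μ, MemLp (⇑u) 1 μ := fun u =>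
    (Lp.memLp u).mono_exponent one_le_two
  set ι : Lp ℂ 2 μ →ₗ[ℂ] Lp ℂ 1 μ :=
    { toFun := fun u => (hincl u).toLp ⇑u
      map_add' := by
        intro u v
        apply Lp.ext
        filter_upwards [MemLp.coeFn_toLp (hincl (u + v)),
          Lp.coeFn_add ((hincl u).toLp ⇑u) ((hincl v).toLp ⇑v),
          MemLp.coeFn_toLp (hincl u), MemLp.coeFn_toLp (hincl v),
          Lp.coeFn_add u v] with x e1 e2 e3 e4 e5
        rw [e1, e2, Pi.add_apply, e3, e4, e5]; rfl
      map_smul' := by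
        intro c u
        apply Lp.ext
        simp only [RingHom.id_apply]
        filter_upwards [MemLp.coeFn_toLp (hincl (c • u)),
          Lp.coeFn_smul c ((hincl u).toLp ⇑u),
          MemLp.coeFn_toLp (hincl u), Lp.coeFn_smul c u] with x e1 e2 e3 e4
        rw [e1, e2, Pi.smul_apply, e3, e4]; rfl } with hιdef
  have hιnorm : ∀ u : Lp ℂ 2 μ, ‖ι u‖ ≤ 1 * ‖u‖ := by
    intro u
    rw [one_mul]
    show ‖(hincl u).toLp ⇑u‖ ≤ ‖u‖
    rw [Lp.norm_toLp, Lp.norm_def]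
    exact ENNReal.toReal_mono (Lp.eLpNorm_ne_top u)
      (eLpNorm_le_eLpNorm_of_exponent_le one_le_two (Lp.aestronglyMeasurable u))
  set ιC : Lp ℂ 2 μ →L[ℂ] Lp ℂ 1 μ := LinearMap.mkContinuous ι 1 hιnorm with hιCdef
  have hιcoe : ∀ u : Lp ℂ 2 μ, ⇑(ιC u) =ᵐ[μ] ⇑u := fun u => MemLp.coeFn_toLp (hincl u)
  set ψ : Lp ℂ 2 μ →L[ℂ] ℂ := φ.comp ιC with hψdef
  set gd : Lp ℂ 2 μ := (InnerProductSpace.toDual ℂ (Lp ℂ 2 μ)).symm ψ with hgddef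
  have hgd : ∀ u : Lp ℂ 2 μ, (inner ℂ gd u : ℂ) = ψ u := fun u =>
    InnerProductSpace.toDual_symm_apply
  -- a strongly measurable representative
  set g₀ : Ω → ℂ := (Lp.aestronglyMeasurable gd).mk ⇑gd with hg₀def
  have hg₀sm : StronglyMeasurable g₀ := (Lp.aestronglyMeasurable gd).stronglyMeasurable_mk
  have hg₀ae : ⇑gd =ᵐ[μ] g₀ := (Lp.aestronglyMeasurable gd).ae_eq_mk
  set c : ℝ := ‖φ‖ with hcdef
  have hc0 : 0 ≤ c := norm_nonneg φ
  have hg₀int : Integrable g₀ μ :=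
    ((memLp_one_iff_integrable.1 (hincl gd)).congr hg₀ae)
  -- the essential bound
  have hnull : ∀ δ : ℝ, 0 < δ → μ {x | c + δ ≤ ‖g₀ x‖} = 0 := by
    intro δ hδ
    set S := {x | c + δ ≤ ‖g₀ x‖} with hSdef
    have hSm : MeasurableSet S :=
      measurableSet_le measurable_const hg₀sm.measurable.norm
    have hg₀ne : ∀ x ∈ S, g₀ x ≠ 0 := by
      intro x hx h0
      rw [hSdef] at hx
      simp only [Set.mem_setOf_eq, h0, norm_zero] at hx
      linarith
    set u₀ : Ω → ℂ := S.indicator (fun x => g₀ x / (‖g₀ x‖ : ℂ)) with hu₀def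
    have hu₀m : AEStronglyMeasurable u₀ μ :=
      ((hg₀sm.measurable.div
        (Complex.measurable_ofReal.comp hg₀sm.measurable.norm)).indicator
        hSm).aestronglyMeasurable
    have hu₀b : ∀ x, ‖u₀ x‖ ≤ 1 := by
      intro x
      by_cases hx : x ∈ S
      · rw [hu₀def, Set.indicator_of_mem hx, norm_div]
        rw [Complex.norm_real, norm_norm, div_self]
        exact fun h => hg₀ne x hx (norm_eq_zero.1 h)
      · rw [hu₀def, Set.indicator_of_notMem hx]; simp
    have hu₀2 : MemLp u₀ 2 μ :=
      (memLp_top_of_bound hu₀m 1 (Filter.Eventually.of_forall hu₀b)).mono_exponent le_top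
    set u : Lp ℂ 2 μ := hu₀2.toLp u₀ with hudef
    set ρ : Ω → ℝ := S.indicator (fun x => ‖g₀ x‖) with hρdef
    have hρint : Integrable ρ μ := hg₀int.norm.indicator hSm
    have hψu : ψ u = ((∫ x, ρ x ∂μ : ℝ) : ℂ) := by
      have hcast : ∫ x, ((ρ x : ℝ) : ℂ) ∂μ = ((∫ x, ρ x ∂μ : ℝ) : ℂ) := integral_ofReal
      rw [← hgd u, L2.inner_def, ← hcast]
      apply integral_congr_ae
      filter_upwards [hg₀ae, hu₀2.coeFn_toLp] with x e1 e2
      rw [RCLike.inner_apply, e1, e2]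
      by_cases hx : x ∈ S
      · rw [hu₀def, hρdef]
        simp only [Set.indicator_of_mem hx]
        have hne : g₀ x ≠ 0 := hg₀ne x hx
        have hnorm_ne : (‖g₀ x‖ : ℂ) ≠ 0 := by
          simp only [ne_eq, Complex.ofReal_eq_zero, norm_eq_zero]
          exact hne
        have h2 : (starRingEnd ℂ) (g₀ x) * g₀ x = ((‖g₀ x‖ ^ 2 : ℝ) : ℂ) := by
          rw [← Complex.normSq_eq_conj_mul_self, Complex.normSq_eq_norm_sq]
        rw [mul_comm, mul_div_assoc', h2, eq_comm, eq_div_iff hnorm_ne]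
        push_cast
        ring
      · rw [hu₀def, hρdef]
        simp [Set.indicator_of_notMem hx]
    have hb1 : (c + δ) * (μ S).toReal ≤ ∫ x, ρ x ∂μ := by
      have : ∫ x, S.indicator (fun _ => (c + δ)) x ∂μ = (c + δ) * (μ S).toReal := by
        rw [integral_indicator_const _ hSm]
        simp [mul_comm, Measure.real]
      rw [← this]
      refine integral_mono ((integrable_const (c + δ)).indicator hSm) hρint ?_
      intro x
      by_cases hx : x ∈ S
      · simp only [hρdef, Set.indicator_of_mem hx]
        exact hx
      · simp [hρdef, Set.indicator_of_notMem hx]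
    -- upper bound via the operator norm
    have hιCu : ‖ιC u‖ ≤ (μ S).toReal := by
      have h0 : ‖ιC u‖ = (eLpNorm u₀ 1 μ).toReal := by
        show ‖(hincl u).toLp ⇑u‖ = _
        rw [Lp.norm_toLp]
        congr 1
        exact eLpNorm_congr_ae hu₀2.coeFn_toLp
      rw [h0]
      have h1 : eLpNorm u₀ 1 μ ≤ μ S := by
        rw [eLpNorm_one_eq_lintegral_enorm]
        calc ∫⁻ x, ‖u₀ x‖₊ ∂μ ≤ ∫⁻ x, S.indicator (fun _ => (1 : ℝ≥0∞)) x ∂μ := by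
              refine lintegral_mono fun x => ?_
              by_cases hx : x ∈ S
              · rw [Set.indicator_of_mem hx]
                simpa [← ENNReal.coe_one, ENNReal.coe_le_coe, ← NNReal.coe_le_coe]
                  using hu₀b x
              · rw [hu₀def, Set.indicator_of_notMem hx, Set.indicator_of_notMem hx]
                simp
          _ = μ S := by rw [lintegral_indicator hSm]; simp
      exact le_trans (ENNReal.toReal_mono (measure_ne_top μ S) h1) le_rfl
    have hb2 : ‖ψ u‖ ≤ c * (μ S).toReal := by
      calc ‖ψ u‖ = ‖φ (ιC u)‖ := rfl
        _ ≤ c * ‖ιC u‖ := φ.le_opNorm _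
        _ ≤ c * (μ S).toReal := by
            exact mul_le_mul_of_nonneg_left hιCu hc0
    have hρψ : ∫ x, ρ x ∂μ ≤ ‖ψ u‖ := by
      rw [hψu, Complex.norm_real]
      exact le_abs_self _
    have hfin : (c + δ) * (μ S).toReal ≤ c * (μ S).toReal :=
      le_trans hb1 (le_trans hρψ hb2)
    have hexp : c * (μ S).toReal + δ * (μ S).toReal ≤ c * (μ S).toReal := by
      rw [← add_mul]; exact hfin
    have htr : (μ S).toReal = 0 := by
      by_contra hne
      have hpos : 0 < (μ S).toReal :=
        lt_of_le_of_ne ENNReal.toReal_nonneg (Ne.symm hne)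
      have := mul_pos hδ hpos
      linarith
    exact (ENNReal.toReal_eq_zero_iff _).1 htr |>.resolve_right (measure_ne_top μ S)
  -- a.e. bound
  have hbdd : ∀ᵐ x ∂μ, ‖g₀ x‖ ≤ c := by
    have hU : μ {x | c < ‖g₀ x‖} = 0 := by
      have hsub : {x | c < ‖g₀ x‖} ⊆ ⋃ n : ℕ, {x | c + 1 / (n + 1) ≤ ‖g₀ x‖} := by
        intro x hx
        simp only [Set.mem_setOf_eq] at hx
        obtain ⟨n, hn⟩ := exists_nat_one_div_lt (sub_pos.2 hx)
        refine Set.mem_iUnion.2 ⟨n, ?_⟩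
        have : (1 : ℝ) / (n + 1) < ‖g₀ x‖ - c := hn
        simp only [Set.mem_setOf_eq]
        linarith
      exact measure_mono_null hsub
        (measure_iUnion_null fun n => hnull _ (by positivity))
    rw [ae_iff]
    convert hU using 2
    ext x
    simp [not_le]
  -- the representing function
  set w : Ω → ℂ := fun x => (starRingEnd ℂ) (g₀ x) with hwdef
  have hwm : MemLp w ⊤ μ := by
    refine memLp_top_of_bound
      ((RCLike.continuous_conj.comp_stronglyMeasurable hg₀sm).aestronglyMeasurable) c ?_
    filter_upwards [hbdd] with x hx
    simpa [hwdef] using hx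
  refine ⟨w, hwm, ?_⟩
  have heq : (⇑φ : Lp ℂ 1 μ → ℂ) = ⇑(pairCLM hwm) := by
    refine (Lp.simpleFunc.denseRange (E := ℂ) (μ := μ) (p := 1)
      ENNReal.one_ne_top).equalizer φ.continuous (pairCLM hwm).continuous ?_
    funext sfn
    show φ ↑sfn = pairCLM hwm ↑sfn
    set sf := Lp.simpleFunc.toSimpleFunc sfn with hsfdef
    have hsfe : ⇑sf =ᵐ[μ] ⇑(sfn : Lp ℂ 1 μ) := Lp.simpleFunc.toSimpleFunc_eq_toFun sfn
    obtain ⟨Cb, hCb⟩ := sf.exists_forall_norm_le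
    have hsm2 : MemLp (⇑sf) 2 μ :=
      (memLp_top_of_bound sf.aestronglyMeasurable Cb
        (Filter.Eventually.of_forall hCb)).mono_exponent le_top
    set u2 : Lp ℂ 2 μ := hsm2.toLp ⇑sf with hu2def
    have hι2 : ιC u2 = (sfn : Lp ℂ 1 μ) := by
      apply Lp.ext
      filter_upwards [hιcoe u2, hsm2.coeFn_toLp, hsfe] with x e1 e2 e3
      rw [e1, e2, e3]
    calc φ ↑sfn = ψ u2 := by rw [← hι2]; rfl
      _ = (inner ℂ gd u2 : ℂ) := (hgd u2).symm
      _ = ∫ x, (starRingEnd ℂ) ((gd : Ω → ℂ) x) * (u2 : Ω → ℂ) x ∂μ := by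
          rw [L2.inner_def]
          apply integral_congr_ae
          refine Filter.Eventually.of_forall fun x => ?_
          simp only [RCLike.inner_apply]; ring
      _ = ∫ x, w x * (sfn : Lp ℂ 1 μ) x ∂μ := by
          apply integral_congr_ae
          filter_upwards [hg₀ae, hsm2.coeFn_toLp, hsfe] with x e1 e2 e3
          rw [e1, e2, e3, hwdef]
      _ = pairCLM hwm ↑sfn := rfl
  intro h
  rw [show φ h = pairCLM hwm h from congrFun heq h]
  rfl

end Rep
set_option maxHeartbeats 1000000 in
/-- If `X` is a small subspace of `L¹(Ω)` (no projection `P_A`, `μ A > 0`,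
maps `X` onto `L¹(A)`), then for every `A` of positive measure and `ε > 0` there is a norm-one
`f ∈ L^∞` supported in `A` with `|∫ f h dμ| ≤ ε` for every `h` in the unit ball of `X`. -/
theorem small_subspace_poor
    {Ω : Type*} [MeasurableSpace Ω] (μ : Measure Ω) [IsProbabilityMeasure μ]
    (hna : Nonatomic μ)
    (X : Submodule ℂ (Lp ℂ 1 μ)) (hXclosed : IsClosed (X : Set (Lp ℂ 1 μ)))
    (hsmall : ∀ A : Set Ω, MeasurableSet A → 0 < μ A → ¬ MapsOnto μ (X : Set (Lp ℂ 1 μ)) A) :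
    ∀ A : Set Ω, MeasurableSet A → 0 < μ A → ∀ ε : ℝ, 0 < ε →
      ∃ f : Lp ℂ ⊤ μ, ‖f‖ = 1 ∧ (∀ᵐ x ∂μ, x ∉ A → (f : Ω → ℂ) x = 0) ∧
        ∀ h ∈ X, ‖h‖ ≤ 1 → ‖∫ x, (f : Ω → ℂ) x * (h : Ω → ℂ) x ∂μ‖ ≤ ε := by
  intro A hA hApos ε hε
  by_contra hcon
  push_neg at hcon
  apply hsmall A hA hApos
  have stepA : ∀ g : Lp ℂ 1 μ, maskCLM μ A hA g = g → ∀ δ : ℝ, 0 < δ →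
      ∃ h, h ∈ X ∧ ‖h‖ ≤ ε⁻¹ * ‖g‖ ∧ ‖g - maskCLM μ A hA h‖ < δ := by
    intro g hg δ hδ
    set r : ℝ := ε⁻¹ * ‖g‖ with hrdef
    have hr0 : 0 ≤ r := mul_nonneg (inv_nonneg.2 hε.le) (norm_nonneg g)
    set D : Set (Lp ℂ 1 μ) :=
      maskCLM μ A hA '' ((X : Set (Lp ℂ 1 μ)) ∩ Metric.closedBall 0 r) with hDdef
    suffices hgD : g ∈ closure D by
      rcases Metric.mem_closure_iff.1 hgD δ hδ with ⟨v, hvD, hdist⟩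
      rcases hvD with ⟨h, ⟨hhX, hhball⟩, rfl⟩
      refine ⟨h, hhX, ?_, ?_⟩
      · simpa [mem_closedBall_zero_iff] using hhball
      · rwa [dist_eq_norm] at hdist
    by_contra hgD
    have hDconv : Convex ℝ D := by
      have h1 : Convex ℝ ((X : Set (Lp ℂ 1 μ)) ∩ Metric.closedBall 0 r) := by
        refine Convex.inter ?_ (convex_closedBall 0 r)
        have := (X.restrictScalars ℝ).convex
        simpa using this
      have h2 := h1.linear_image ((maskCLM μ A hA).restrictScalars ℝ).toLinearMap
      simpa using h2
    obtain ⟨φ, u, hu, hug⟩ := RCLike.geometric_hahn_banach_closed_point (𝕜 := ℂ)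
      hDconv.closure isClosed_closure hgD
    have h0D : (0 : Lp ℂ 1 μ) ∈ D :=
      ⟨0, ⟨X.zero_mem, by simp [hr0]⟩, map_zero _⟩
    have hu0 : 0 < u := by
      have := hu 0 (subset_closure h0D)
      simpa using this
    have habs : ∀ h : Lp ℂ 1 μ, h ∈ X → ‖h‖ ≤ r → ‖φ (maskCLM μ A hA h)‖ ≤ u := by
      intro h hhX hhr
      rcases eq_or_ne (φ (maskCLM μ A hA h)) 0 with h0 | h0
      · rw [h0, norm_zero]; exact hu0.le
      set a : ℂ := (starRingEnd ℂ) (φ (maskCLM μ A hA h)) / ‖φ (maskCLM μ A hA h)‖ with hadef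
      have ha1 : ‖a‖ = 1 := by
        rw [hadef, norm_div, RCLike.norm_conj, Complex.norm_real, norm_norm,
          div_self (norm_ne_zero_iff.2 h0)]
      have haD : maskCLM μ A hA (a • h) ∈ D :=
        ⟨a • h, ⟨X.smul_mem a hhX, by
          simpa [mem_closedBall_zero_iff, norm_smul, ha1] using hhr⟩, rfl⟩
      have hre := hu _ (subset_closure haD)
      have hval : φ (maskCLM μ A hA (a • h)) = ((‖φ (maskCLM μ A hA h)‖ : ℝ) : ℂ) := by
        rw [_root_.map_smul, _root_.map_smul, smul_eq_mul, hadef, div_mul_eq_mul_div, mul_comm,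
          Complex.mul_conj]
        rw [Complex.normSq_eq_norm_sq, div_eq_iff (by
          simpa [Complex.ofReal_eq_zero] using norm_ne_zero_iff.2 h0)]
        push_cast
        ring
      rw [hval] at hre
      have : RCLike.re ((‖φ (maskCLM μ A hA h)‖ : ℝ) : ℂ) = ‖φ (maskCLM μ A hA h)‖ := by
        simp [RCLike.re_to_complex]
      rw [this] at hre
      exact hre.le
    obtain ⟨w, hwm, hφw⟩ := exists_rep μ φ
    set f₀ : Ω → ℂ := A.indicator w with hf₀def
    have hf₀m : MemLp f₀ ⊤ μ := hwm.indicator hA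
    set Fl : Lp ℂ ⊤ μ := hf₀m.toLp f₀ with hFldef
    have hFlcoe : ⇑Fl =ᵐ[μ] f₀ := hf₀m.coeFn_toLp
    have key1 : ∀ h : Lp ℂ 1 μ, ∫ x, (Fl : Ω → ℂ) x * (h : Ω → ℂ) x ∂μ
        = φ (maskCLM μ A hA h) := by
      intro h
      rw [hφw (maskCLM μ A hA h)]
      apply integral_congr_ae
      filter_upwards [hFlcoe, maskCLM_coeFn hA h] with x e1 e2
      rw [e1, e2]
      by_cases hx : x ∈ A
      · rw [hf₀def, Set.indicator_of_mem hx, Set.indicator_of_mem hx]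
      · rw [hf₀def, Set.indicator_of_notMem hx, Set.indicator_of_notMem hx]
        simp
    have key2 : ∫ x, (Fl : Ω → ℂ) x * (g : Ω → ℂ) x ∂μ = φ g := by
      rw [key1 g, hg]
    rcases eq_or_ne ‖Fl‖ 0 with hF0 | hF0
    · have hFl0 : Fl = 0 := norm_eq_zero.1 hF0
      have hφg0 : φ g = 0 := by
        rw [← key2]
        have hz : ∀ᵐ x ∂μ, (Fl : Ω → ℂ) x * (g : Ω → ℂ) x = 0 := by
          have h0 : ⇑Fl =ᵐ[μ] 0 := by rw [hFl0]; exact Lp.coeFn_zero ℂ ⊤ μ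
          filter_upwards [h0] with x hx
          rw [hx]; simp
        rw [integral_congr_ae hz, integral_zero]
      rw [hφg0] at hug
      simp at hug
      linarith
    · have hFpos : 0 < ‖Fl‖ := (norm_nonneg Fl).lt_of_ne (Ne.symm hF0)
      have hgne : g ≠ 0 := by
        intro h0
        rw [h0, map_zero] at hug
        simp at hug
        linarith
      have hrpos : 0 < r := mul_pos (inv_pos.2 hε) (norm_pos_iff.2 hgne)
      set fhat : Lp ℂ ⊤ μ := ((‖Fl‖⁻¹ : ℝ) : ℂ) • Fl with hfhatdef
      have hfhat1 : ‖fhat‖ = 1 := by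
        rw [hfhatdef, norm_smul, Complex.norm_real, Real.norm_eq_abs, abs_of_nonneg (inv_nonneg.2 hFpos.le)]
        field_simp
      have hfhats : ∀ᵐ x ∂μ, x ∉ A → (fhat : Ω → ℂ) x = 0 := by
        filter_upwards [Lp.coeFn_smul ((‖Fl‖⁻¹ : ℝ) : ℂ) Fl, hFlcoe] with x e1 e2 hx
        rw [hfhatdef, e1, Pi.smul_apply, e2, hf₀def, Set.indicator_of_notMem hx, smul_zero]
      obtain ⟨h, hhX, hh1, hgt⟩ := hcon fhat hfhat1 hfhats
      have hfh : ∫ x, (fhat : Ω → ℂ) x * (h : Ω → ℂ) x ∂μ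
          = ((‖Fl‖⁻¹ : ℝ) : ℂ) • ∫ x, (Fl : Ω → ℂ) x * (h : Ω → ℂ) x ∂μ := by
        rw [← integral_smul]
        apply integral_congr_ae
        filter_upwards [Lp.coeFn_smul ((‖Fl‖⁻¹ : ℝ) : ℂ) Fl] with x e1
        rw [hfhatdef, e1, Pi.smul_apply, smul_eq_mul, smul_eq_mul]
        ring
      have hεF : ε * ‖Fl‖ < ‖φ (maskCLM μ A hA h)‖ := by
        rw [hfh, key1 h, norm_smul, Complex.norm_real, Real.norm_eq_abs,
          abs_of_nonneg (inv_nonneg.2 hFpos.le)] at hgt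
        calc ε * ‖Fl‖ < (‖Fl‖⁻¹ * ‖φ (maskCLM μ A hA h)‖) * ‖Fl‖ := by
              exact mul_lt_mul_of_pos_right hgt hFpos
          _ = ‖φ (maskCLM μ A hA h)‖ := by field_simp
      have hscale : r * ‖φ (maskCLM μ A hA h)‖ ≤ u := by
        have hmem := habs (((r : ℝ) : ℂ) • h) (X.smul_mem _ hhX) (by
          rw [norm_smul, Complex.norm_real, Real.norm_eq_abs, abs_of_nonneg hr0]
          calc r * ‖h‖ ≤ r * 1 := mul_le_mul_of_nonneg_left hh1 hr0
            _ = r := mul_one r)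
        rw [_root_.map_smul, _root_.map_smul, norm_smul, Complex.norm_real, Real.norm_eq_abs, abs_of_nonneg hr0] at hmem
        exact hmem
      have hφg : ‖φ g‖ ≤ ‖Fl‖ * ‖g‖ := by
        rw [← key2]
        have hb := pair_norm_le hf₀m g
        have h1 : ∫ x, (Fl : Ω → ℂ) x * (g : Ω → ℂ) x ∂μ
            = ∫ x, f₀ x * (g : Ω → ℂ) x ∂μ :=
          integral_congr_ae (by filter_upwards [hFlcoe] with x e1; rw [e1])
        have h2 : (eLpNorm f₀ ⊤ μ).toReal = ‖Fl‖ := (Lp.norm_toLp f₀ hf₀m).symm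
        rw [h1]
        rw [h2] at hb
        exact hb
      have hren : RCLike.re (φ g) ≤ ‖φ g‖ := RCLike.re_le_norm _
      have hugn : u < ‖Fl‖ * ‖g‖ := lt_of_lt_of_le (lt_of_lt_of_le hug hren) hφg
      have hgr : ‖g‖ = ε * r := by rw [hrdef]; field_simp
      rw [hgr] at hugn
      nlinarith
  intro g hgout
  have hTg : maskCLM μ A hA g = g := by
    apply Lp.ext
    filter_upwards [maskCLM_coeFn hA g, hgout] with x e1 e2
    rw [e1]
    by_cases hx : x ∈ A
    · rw [Set.indicator_of_mem hx]
    · rw [Set.indicator_of_notMem hx, e2 hx]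
  obtain ⟨h, hhX, hTh⟩ := exists_exact (maskCLM μ A hA) (maskCLM_idem hA) X hXclosed ε⁻¹
    (inv_nonneg.2 hε.le) g hTg stepA
  refine ⟨h, hhX, ?_⟩
  have hge : ⇑g =ᵐ[μ] A.indicator ⇑h := by
    have := maskCLM_coeFn hA h
    rwa [hTh] at this
  filter_upwards [hge] with x e1 hx
  rw [e1, Set.indicator_of_mem hx]
end

section
/- Let G₁ and G₂ be compact abelian groups with G₁ infinite, and suppose C_{Λ₁}(G₁) is rich in C(G₁) and C_{Λ₂}(G₂) is rich in C(G₂), in the sense that for every non-empty open set O in the respective group and every ε > 0 there is a norm-one continuous function vanishing outside O at distance at most ε from the subspace. Then for every non-empty open set O ⊆ G₁ × G₂ and every ε > 0 there exists f in the unit sphere of C(G₁ × G₂) vanishing outside O with d(f, C_{Λ₁ × Λ₂}(G₁ × G₂)) ≤ ε. -/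
open MeasureTheory Metric

noncomputable section

/-- The character `(γ₁ ⊗ γ₂)(x, y) = γ₁ x ⬝ γ₂ y` of a product group. -/
def charProd {G₁ G₂ : Type*} [TopologicalSpace G₁] [TopologicalSpace G₂]
    (γ₁ : C(G₁, ℂ)) (γ₂ : C(G₂, ℂ)) : C(G₁ × G₂, ℂ) :=
  ⟨fun p => γ₁ p.1 * γ₂ p.2,
    ((γ₁.continuous.comp continuous_fst).mul (γ₂.continuous.comp continuous_snd))⟩

/-- `C_Λ(G₁ × G₂)` for `Λ ⊆ Γ₁ × Γ₂`, the dual of the product being identified with the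
product of the duals. -/
def CLamProd {G₁ G₂ : Type*} [AddCommGroup G₁] [TopologicalSpace G₁]
    [AddCommGroup G₂] [TopologicalSpace G₂] [MeasurableSpace G₁] [MeasurableSpace G₂]
    (m₁ : Measure G₁) (m₂ : Measure G₂)
    (Λ : Set (C(G₁, ℂ) × C(G₂, ℂ))) : Set C(G₁ × G₂, ℂ) :=
  {F | ∀ (γ₁ : C(G₁, ℂ)) (γ₂ : C(G₂, ℂ)), IsChar γ₁ → IsChar γ₂ → (γ₁, γ₂) ∉ Λ →
    fourCoeff (m₁.prod m₂) (F : G₁ × G₂ → ℂ) (charProd γ₁ γ₂) = 0}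

lemma fourCoeff_charProd {G₁ G₂ : Type*} [TopologicalSpace G₁] [TopologicalSpace G₂]
    [MeasurableSpace G₁] [MeasurableSpace G₂]
    (m₁ : Measure G₁) (m₂ : Measure G₂) [SigmaFinite m₁] [SigmaFinite m₂]
    (f₁ : C(G₁, ℂ)) (f₂ : C(G₂, ℂ)) (γ₁ : C(G₁, ℂ)) (γ₂ : C(G₂, ℂ)) :
    fourCoeff (m₁.prod m₂) (charProd f₁ f₂ : G₁ × G₂ → ℂ) (charProd γ₁ γ₂) =
      fourCoeff m₁ (f₁ : G₁ → ℂ) γ₁ * fourCoeff m₂ (f₂ : G₂ → ℂ) γ₂ := by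
  unfold fourCoeff charProd
  simp only [ContinuousMap.coe_mk]
  have h : (fun p : G₁ × G₂ => (f₁ p.1 * f₂ p.2) * (starRingEnd ℂ) (γ₁ p.1 * γ₂ p.2)) =
      fun p : G₁ × G₂ => (f₁ p.1 * (starRingEnd ℂ) (γ₁ p.1)) *
        (f₂ p.2 * (starRingEnd ℂ) (γ₂ p.2)) := by
    funext p; simp only [map_mul]; ring
  rw [h]
  exact integral_prod_mul (μ := m₁) (ν := m₂)
    (f := fun x => f₁ x * (starRingEnd ℂ) (γ₁ x))
    (g := fun y => f₂ y * (starRingEnd ℂ) (γ₂ y))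

lemma charProd_sub_left {G₁ G₂ : Type*} [TopologicalSpace G₁] [TopologicalSpace G₂]
    (f g : C(G₁, ℂ)) (h : C(G₂, ℂ)) :
    charProd f h - charProd g h = charProd (f - g) h := by
  ext p; simp [charProd]; ring

lemma charProd_sub_right {G₁ G₂ : Type*} [TopologicalSpace G₁] [TopologicalSpace G₂]
    (f : C(G₁, ℂ)) (g h : C(G₂, ℂ)) :
    charProd f g - charProd f h = charProd f (g - h) := by
  ext p; simp [charProd]; ring

lemma exists_norm_apply_eq {G : Type*} [TopologicalSpace G] [CompactSpace G] [Nonempty G]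
    (f : C(G, ℂ)) : ∃ x : G, ‖f x‖ = ‖f‖ := by
  obtain ⟨x, -, hx⟩ := isCompact_univ.exists_isMaxOn (Set.univ_nonempty)
    (f.continuous.norm.continuousOn)
  refine ⟨x, le_antisymm (f.norm_coe_le_norm x) ?_⟩
  exact (f.norm_le (norm_nonneg _)).2 fun y => hx (Set.mem_univ y)

lemma norm_charProd {G₁ G₂ : Type*} [TopologicalSpace G₁] [TopologicalSpace G₂]
    [CompactSpace G₁] [CompactSpace G₂] [Nonempty G₁] [Nonempty G₂]
    (f : C(G₁, ℂ)) (g : C(G₂, ℂ)) : ‖charProd f g‖ = ‖f‖ * ‖g‖ := by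
  refine le_antisymm ?_ ?_
  · refine ((charProd f g).norm_le (mul_nonneg (norm_nonneg _) (norm_nonneg _))).2 fun p => ?_
    simp only [charProd, ContinuousMap.coe_mk, norm_mul]
    exact mul_le_mul (f.norm_coe_le_norm p.1) (g.norm_coe_le_norm p.2) (norm_nonneg _)
      (norm_nonneg _)
  · obtain ⟨x, hx⟩ := exists_norm_apply_eq f
    obtain ⟨y, hy⟩ := exists_norm_apply_eq g
    calc ‖f‖ * ‖g‖ = ‖charProd f g (x, y)‖ := by
          simp [charProd, norm_mul, hx, hy]
      _ ≤ ‖charProd f g‖ := (charProd f g).norm_coe_le_norm _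

lemma zero_mem_CLam {G : Type*} [AddCommGroup G] [TopologicalSpace G] [MeasurableSpace G]
    (m : Measure G) (Λ : Set C(G, ℂ)) : (0 : C(G, ℂ)) ∈ CLam m Λ := by
  intro γ _ _
  simp [fourCoeff]

/-- If `C_{Λ₁}(G₁)` is rich in `C(G₁)` and `C_{Λ₂}(G₂)` is rich in
`C(G₂)` (both in the open-set sense), then `C_{Λ₁ × Λ₂}(G₁ × G₂)` is rich in `C(G₁ × G₂)`. -/
theorem rich_CLam_prod_of_factors
    {G₁ G₂ : Type*} [AddCommGroup G₁] [TopologicalSpace G₁] [IsTopologicalAddGroup G₁]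
    [CompactSpace G₁] [MeasurableSpace G₁] [BorelSpace G₁] [Infinite G₁]
    [AddCommGroup G₂] [TopologicalSpace G₂] [IsTopologicalAddGroup G₂]
    [CompactSpace G₂] [MeasurableSpace G₂] [BorelSpace G₂]
    (m₁ : Measure G₁) [m₁.IsAddHaarMeasure] [IsProbabilityMeasure m₁]
    (m₂ : Measure G₂) [m₂.IsAddHaarMeasure] [IsProbabilityMeasure m₂]
    (Λ₁ : Set C(G₁, ℂ)) (Λ₂ : Set C(G₂, ℂ))
    (hrich₁ : ∀ O₁ : Set G₁, IsOpen O₁ → O₁.Nonempty → ∀ ε : ℝ, 0 < ε →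
      ∃ f₁ : C(G₁, ℂ), ‖f₁‖ = 1 ∧ (∀ x ∉ O₁, f₁ x = 0) ∧ infDist f₁ (CLam m₁ Λ₁) ≤ ε)
    (hrich₂ : ∀ O₂ : Set G₂, IsOpen O₂ → O₂.Nonempty → ∀ ε : ℝ, 0 < ε →
      ∃ f₂ : C(G₂, ℂ), ‖f₂‖ = 1 ∧ (∀ y ∉ O₂, f₂ y = 0) ∧ infDist f₂ (CLam m₂ Λ₂) ≤ ε) :
    ∀ O : Set (G₁ × G₂), IsOpen O → O.Nonempty → ∀ ε : ℝ, 0 < ε →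
      ∃ F : C(G₁ × G₂, ℂ), ‖F‖ = 1 ∧ (∀ p ∉ O, F p = 0) ∧
        infDist F (CLamProd m₁ m₂ (Λ₁ ×ˢ Λ₂)) ≤ ε := by
  intro O hO hOne ε hε
  have hG₂ : Nonempty G₂ := by
    by_contra h
    rw [not_nonempty_iff] at h
    have h1 : m₂ Set.univ = 1 := measure_univ
    rw [Set.univ_eq_empty_iff.2 h, measure_empty] at h1
    exact zero_ne_one h1
  have hG₁ : Nonempty G₁ := inferInstance
  obtain ⟨⟨a, b⟩, hab⟩ := hOne
  obtain ⟨O₁, O₂, hO₁, hO₂, ha, hb, hsub⟩ := isOpen_prod_iff.mp hO a b hab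
  set δ : ℝ := min (ε / 3) 1 with hδdef
  have hδpos : 0 < δ := lt_min (by linarith) one_pos
  have hδ1 : δ ≤ 1 := min_le_right _ _
  have hδε : δ ≤ ε / 3 := min_le_left _ _
  obtain ⟨f₁, hf₁norm, hf₁supp, hf₁dist⟩ := hrich₁ O₁ hO₁ ⟨a, ha⟩ (δ / 2) (by linarith)
  obtain ⟨f₂, hf₂norm, hf₂supp, hf₂dist⟩ := hrich₂ O₂ hO₂ ⟨b, hb⟩ (δ / 2) (by linarith)
  have hne₁ : (CLam m₁ Λ₁).Nonempty := ⟨0, zero_mem_CLam m₁ Λ₁⟩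
  have hne₂ : (CLam m₂ Λ₂).Nonempty := ⟨0, zero_mem_CLam m₂ Λ₂⟩
  obtain ⟨g₁, hg₁mem, hg₁dist⟩ := (infDist_lt_iff hne₁).1 (lt_of_le_of_lt hf₁dist (show δ / 2 < δ by linarith))
  obtain ⟨g₂, hg₂mem, hg₂dist⟩ := (infDist_lt_iff hne₂).1 (lt_of_le_of_lt hf₂dist (show δ / 2 < δ by linarith))
  refine ⟨charProd f₁ f₂, ?_, ?_, ?_⟩
  · rw [norm_charProd, hf₁norm, hf₂norm, one_mul]
  · rintro ⟨x, y⟩ hp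
    have : (x, y) ∉ O₁ ×ˢ O₂ := fun h => hp (hsub h)
    rw [Set.mem_prod, not_and_or] at this
    rcases this with h | h
    · simp [charProd, hf₁supp x h]
    · simp [charProd, hf₂supp y h]
  · have hmem : charProd g₁ g₂ ∈ CLamProd m₁ m₂ (Λ₁ ×ˢ Λ₂) := by
      intro γ₁ γ₂ hχ₁ hχ₂ hnot
      rw [Set.mem_prod, not_and_or] at hnot
      rw [fourCoeff_charProd]
      rcases hnot with h | h
      · rw [hg₁mem γ₁ hχ₁ h, zero_mul]
      · rw [hg₂mem γ₂ hχ₂ h, mul_zero]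
    refine le_trans (infDist_le_dist_of_mem hmem) ?_
    have hd1 : dist f₁ g₁ ≤ δ := le_of_lt hg₁dist
    have hd2 : dist f₂ g₂ ≤ δ := le_of_lt hg₂dist
    have hg₁norm : ‖g₁‖ ≤ 1 + δ := by
      have h1 := norm_sub_norm_le g₁ f₁
      have h2 : ‖g₁ - f₁‖ = dist f₁ g₁ := by rw [norm_sub_rev]; exact (dist_eq_norm _ _).symm
      linarith
    calc dist (charProd f₁ f₂) (charProd g₁ g₂)
        ≤ dist (charProd f₁ f₂) (charProd g₁ f₂) +
            dist (charProd g₁ f₂) (charProd g₁ g₂) := dist_triangle _ _ _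
      _ = ‖charProd (f₁ - g₁) f₂‖ + ‖charProd g₁ (f₂ - g₂)‖ := by
          rw [dist_eq_norm, dist_eq_norm, charProd_sub_left, charProd_sub_right]
      _ = ‖f₁ - g₁‖ * ‖f₂‖ + ‖g₁‖ * ‖f₂ - g₂‖ := by rw [norm_charProd, norm_charProd]
      _ ≤ δ * 1 + (1 + δ) * δ := by
          have e1 : ‖f₁ - g₁‖ = dist f₁ g₁ := (dist_eq_norm _ _).symm
          have e2 : ‖f₂ - g₂‖ = dist f₂ g₂ := (dist_eq_norm _ _).symm
          rw [hf₂norm, e1, e2]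
          have := mul_le_mul hg₁norm hd2 dist_nonneg (by linarith)
          linarith
      _ ≤ ε := by nlinarith
end
end
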